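/- arXiv:1004.2653 — 6 statements merged into one kernel-verified Lean document; each statement's English description precedes it below -/
import Mathlib

section
/- Let f : ℝ → ℝ be a continuous function satisfying f(x + π) = f(x) and f(π − x) = f(x) for all x ≥ 0, and suppose the integral ∫₀^∞ (sin²x / x²) f(x) dx converges. Then ∫₀^∞ (sin²x / x²) f(x) dx = ∫₀^{π/2} f(x) dx. -/
/-!
Write `S x = ∑ₙ sinc² (x + nπ)`. Splitting `n` by parity and using `sinc (2y) = cos y · sinc y`
gives `S x = cos² (x/2) · S (x/2) + sin² (x/2) · S (x/2 + π/2)` on `[0, π]`, a convex combination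
with positive weight on `S (x/2)`. Hence an extremal value of `S` on `[0, π)` recurs at `x/2`, so
at `x/2ⁿ → 0`, and `S ≡ S 0 = 1` on `[0, π]`.

Cutting `[0, Nπ]` into periods, `∫₀^{Nπ} sinc² · f = ∑_{k<N} aₖ` with
`aₙ = ∫₀^π sinc² (x + nπ) f x`. The symmetry of `f` gives `a₋ₖ₋₁ = aₖ`, while dominated convergence
and `S = 1` give `∑_{n ∈ ℤ} aₙ = ∫₀^π f = 2 ∫₀^{π/2} f`.
-/

open Real Filter MeasureTheory intervalIntegral Topology

namespace Real

lemma sinc_sq_le_two_div_one_add_sq (y : ℝ) : sinc y ^ 2 ≤ 2 / (1 + y ^ 2) := by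
  rw [le_div_iff₀ (by positivity)]
  rcases eq_or_ne y 0 with rfl | hy
  · simp
  have h1 : sinc y ^ 2 ≤ 1 := by
    rw [sq_le_one_iff_abs_le_one]; exact abs_sinc_le_one y
  have h2 : sinc y ^ 2 * y ^ 2 ≤ 1 := by
    rw [sinc_of_ne_zero hy, div_pow, div_mul_cancel₀ _ (by positivity)]
    exact sin_sq_le_one y
  nlinarith

lemma sinc_two_mul (y : ℝ) : sinc (2 * y) = cos y * sinc y := by
  rcases eq_or_ne y 0 with rfl | hy
  · simp
  rw [sinc_of_ne_zero hy, sinc_of_ne_zero (by positivity), sin_two_mul]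
  field_simp

lemma cos_sq_add_int_mul_pi (y : ℝ) (n : ℤ) : cos (y + n * π) ^ 2 = cos y ^ 2 := by
  rw [cos_add_int_mul_pi, mul_pow, ← sq_abs ((-1 : ℝ) ^ n), abs_neg_one_zpow, one_pow, one_mul]

end Real

lemma sinc_sq_add_mul_pi_le {x : ℝ} (hx : x ∈ Set.Icc 0 π) (t : ℝ) :
    sinc (x + t * π) ^ 2 ≤ 8 / (1 + t ^ 2) := by
  refine (sinc_sq_le_two_div_one_add_sq _).trans ?_
  rw [div_le_div_iff₀ (by positivity) (by positivity)]
  obtain ⟨hx0, hxπ⟩ := hx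
  have hπ : 3 < π := pi_gt_three
  have h : (t ^ 2 - 2) * π ^ 2 ≤ 2 * (x + t * π) ^ 2 := by
    nlinarith [sq_nonneg (x + t * π + x)]
  rcases le_or_gt (t ^ 2) 2 with ht | ht
  · nlinarith
  · have h9 : (9 : ℝ) ≤ π ^ 2 := by nlinarith
    nlinarith [mul_le_mul_of_nonneg_left h9 (by linarith : 0 ≤ t ^ 2 - 2)]

lemma summable_one_div_one_add_int_sq : Summable fun n : ℤ => 1 / (1 + (n : ℝ) ^ 2) := by
  refine (summable_one_div_int_pow.2 one_lt_two).of_norm_bounded_eventually ?_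
  filter_upwards [eventually_cofinite_ne 0] with n hn
  have : (n : ℝ) ≠ 0 := Int.cast_ne_zero.2 hn
  rw [norm_of_nonneg (by positivity)]
  gcongr
  linarith

lemma HasSum.int_even_add_odd {M : Type*} [AddCommMonoid M] [TopologicalSpace M]
    [ContinuousAdd M] {f : ℤ → M} {a b : M} (he : HasSum (fun k => f (2 * k)) a)
    (ho : HasSum (fun k => f (2 * k + 1)) b) : HasSum f (a + b) := by
  have := mul_right_injective₀ (two_ne_zero' ℤ)
  replace ho := ((add_left_injective 1).comp this).hasSum_range_iff.2 ho
  refine (this.hasSum_range_iff.2 he).add_isCompl ?_ ho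
  simpa [Function.comp_def] using Int.isCompl_even_odd

def IsHalfAngleAverage (g : ℝ → ℝ) : Prop :=
  ∀ x ∈ Set.Icc 0 π, g x = cos (x / 2) ^ 2 * g (x / 2) + sin (x / 2) ^ 2 * g (x / 2 + π / 2)

namespace IsHalfAngleAverage

variable {g : ℝ → ℝ}

lemma neg (hg : IsHalfAngleAverage g) : IsHalfAngleAverage fun y => -g y :=
  fun x hx => by dsimp only; rw [hg x hx]; ring

lemma apply_half_eq_of_isMaxOn (hg : IsHalfAngleAverage g) {x : ℝ} (hx : x ∈ Set.Ico 0 π)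
    (hmax : IsMaxOn g (Set.Icc 0 π) x) : g (x / 2) = g x := by
  obtain ⟨hx0, hxπ⟩ := hx
  have hπ := pi_pos
  have hhalf : g (x / 2) ≤ g x := hmax ⟨by linarith, by linarith⟩
  have hshift : g (x / 2 + π / 2) ≤ g x := hmax ⟨by linarith, by linarith⟩
  have hcos : 0 < cos (x / 2) ^ 2 := pow_pos (cos_pos_of_mem_Ioo ⟨by linarith, by linarith⟩) 2
  refine le_antisymm hhalf (le_of_mul_le_mul_left ?_ hcos)
  linarith [hg x ⟨hx0, hxπ.le⟩, mul_le_mul_of_nonneg_left hshift (sq_nonneg (sin (x / 2))),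
    congrArg (· * g x) (sin_sq_add_cos_sq (x / 2))]

lemma apply_eq_apply_zero_of_isMaxOn (hg : IsHalfAngleAverage g)
    (hcont : ContinuousOn g (Set.Icc 0 π)) (hπ : g π = g 0) {x : ℝ} (hx : x ∈ Set.Icc 0 π)
    (hmax : IsMaxOn g (Set.Icc 0 π) x) : g x = g 0 := by
  rcases hx.2.eq_or_lt with rfl | hxπ
  · exact hπ
  have hiter (n : ℕ) : x / 2 ^ n ∈ Set.Ico 0 π ∧ g (x / 2 ^ n) = g x := by
    induction n with
    | zero => simpa using ⟨hx.1, hxπ⟩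
    | succ n ih =>
      obtain ⟨⟨h0, hlt⟩, heq⟩ := ih
      have hmax' : IsMaxOn g (Set.Icc 0 π) (x / 2 ^ n) := fun y hy => heq ▸ hmax hy
      rw [pow_succ, ← div_div, hg.apply_half_eq_of_isMaxOn ⟨h0, hlt⟩ hmax', heq]
      exact ⟨⟨by positivity, by linarith⟩, rfl⟩
  have hlim : Tendsto (fun n : ℕ => x / 2 ^ n) atTop (𝓝[Set.Icc 0 π] 0) := by
    refine tendsto_nhdsWithin_of_tendsto_nhds_of_eventually_within _ ?_
      (Eventually.of_forall fun n => Set.Ico_subset_Icc_self (hiter n).1)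
    simpa [div_eq_mul_inv] using (tendsto_pow_atTop_nhds_zero_of_lt_one (r := (2 : ℝ)⁻¹)
      (by norm_num) (by norm_num)).const_mul x
  refine tendsto_nhds_unique ?_ ((hcont 0 ⟨le_rfl, pi_pos.le⟩).tendsto.comp hlim)
  simp only [Function.comp_def, (hiter _).2, tendsto_const_nhds]

lemma eqOn_Icc (hg : IsHalfAngleAverage g) (hcont : ContinuousOn g (Set.Icc 0 π))
    (hπ : g π = g 0) : Set.EqOn g (fun _ => g 0) (Set.Icc 0 π) := by
  have hne : (Set.Icc 0 π).Nonempty := Set.nonempty_Icc.2 pi_pos.le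
  obtain ⟨xmax, hxmax, hmax⟩ := isCompact_Icc.exists_isMaxOn hne hcont
  obtain ⟨xmin, hxmin, hmin⟩ := isCompact_Icc.exists_isMinOn hne hcont
  have hupper := hg.apply_eq_apply_zero_of_isMaxOn hcont hπ hxmax hmax
  have hlower : -g xmin = -g 0 :=
    hg.neg.apply_eq_apply_zero_of_isMaxOn hcont.neg (by rw [hπ]) hxmin hmin.neg
  intro x hx
  have hle : g x ≤ g xmax := hmax hx
  have hge : g xmin ≤ g x := hmin hx
  exact le_antisymm (by linarith) (by linarith)

end IsHalfAngleAverage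

noncomputable def sincSqSum (x : ℝ) : ℝ := ∑' n : ℤ, sinc (x + n * π) ^ 2

lemma summable_sinc_sq_add_int_mul_pi {x : ℝ} (hx : x ∈ Set.Icc 0 π) :
    Summable fun n : ℤ => sinc (x + n * π) ^ 2 :=
  (summable_one_div_one_add_int_sq.mul_left 8).of_nonneg_of_le (fun _ => sq_nonneg _)
    fun n => (sinc_sq_add_mul_pi_le hx n).trans_eq (mul_one_div _ _).symm

lemma continuousOn_sincSqSum : ContinuousOn sincSqSum (Set.Icc 0 π) :=
  continuousOn_tsum (fun n => by fun_prop) (summable_one_div_one_add_int_sq.mul_left 8)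
    fun n x hx => by
      rw [norm_of_nonneg (sq_nonneg _), mul_one_div]
      exact sinc_sq_add_mul_pi_le hx n

lemma sincSqSum_add_pi (x : ℝ) : sincSqSum (x + π) = sincSqSum x := by
  rw [sincSqSum, sincSqSum,
    ← (Equiv.addRight (1 : ℤ)).tsum_eq fun n => sinc (x + n * π) ^ 2]
  refine tsum_congr fun n => ?_
  push_cast [Equiv.coe_addRight]
  ring_nf

lemma sincSqSum_zero : sincSqSum 0 = 1 := by
  rw [sincSqSum, tsum_eq_single 0 fun n hn => ?_]
  · simp
  · rw [zero_add, sinc_of_ne_zero (by simpa [pi_ne_zero] using hn), sin_int_mul_pi]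
    simp

lemma isHalfAngleAverage_sincSqSum : IsHalfAngleAverage sincSqSum := by
  intro x ⟨hx0, hxπ⟩
  have hdouble (y : ℝ) (hy : y ∈ Set.Icc 0 π) (c : ℝ)
      (hc : ∀ n : ℤ, cos (y + n * π) ^ 2 = c) :
      HasSum (fun n : ℤ => sinc (2 * (y + n * π)) ^ 2) (c * sincSqSum y) := by
    simp only [sinc_two_mul, mul_pow, hc]
    exact (summable_sinc_sq_add_int_mul_pi hy).hasSum.mul_left c
  have heven := hdouble (x / 2) ⟨by linarith, by linarith⟩ _ (cos_sq_add_int_mul_pi _)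
  have hodd := hdouble (x / 2 + π / 2) ⟨by linarith [pi_pos], by linarith⟩ (sin (x / 2) ^ 2)
    fun n => by rw [cos_sq_add_int_mul_pi, cos_add_pi_div_two, neg_sq]
  refine (HasSum.int_even_add_odd ?_ ?_).tsum_eq
  · convert heven using 3 with n; push_cast; ring_nf
  · convert hodd using 3 with n; push_cast; ring_nf

lemma sincSqSum_eq_one {x : ℝ} (hx : x ∈ Set.Icc 0 π) : sincSqSum x = 1 := by
  have hπ : sincSqSum π = sincSqSum 0 := by rw [← zero_add π, sincSqSum_add_pi]
  exact (isHalfAngleAverage_sincSqSum.eqOn_Icc continuousOn_sincSqSum hπ hx).trans sincSqSum_zero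
lemma apply_add_nat_mul_of_nonneg {f : ℝ → ℝ} {c : ℝ} (hc : 0 ≤ c)
    (hper : ∀ x : ℝ, 0 ≤ x → f (x + c) = f x) (k : ℕ) {x : ℝ} (hx : 0 ≤ x) :
    f (x + k * c) = f x := by
  induction k with
  | zero => simp
  | succ k ih => rw [Nat.cast_succ, add_one_mul, ← add_assoc, hper _ (by positivity), ih]

lemma integral_zero_nat_mul_eq_sum {g : ℝ → ℝ} (hg : Continuous g) (c : ℝ) (N : ℕ) :
    ∫ x in (0 : ℝ)..N * c, g x =
      ∑ k ∈ Finset.range N, ∫ x in (0 : ℝ)..c, g (x + k * c) := by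
  have := sum_integral_adjacent_intervals (a := fun k : ℕ => k * c) (n := N)
    fun k _ => hg.intervalIntegrable (μ := volume) _ _
  simp only [Nat.cast_zero, zero_mul] at this
  rw [← this]
  refine Finset.sum_congr rfl fun k _ => ?_
  rw [integral_comp_add_right]
  push_cast
  ring_nf

lemma integral_mul_comp_sub_eq {f : ℝ → ℝ} {c : ℝ} (hc : 0 ≤ c)
    (hsym : ∀ x : ℝ, 0 ≤ x → f (c - x) = f x) (g : ℝ → ℝ) :
    ∫ x in (0 : ℝ)..c, g x * f x = ∫ x in (0 : ℝ)..c, g (c - x) * f x := by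
  have := integral_comp_sub_left (fun x => g x * f x) c (a := 0) (b := c)
  rw [sub_self, sub_zero] at this
  rw [← this]
  refine integral_congr fun x hx => ?_
  rw [Set.uIcc_of_le hc] at hx
  simp only [hsym x hx.1]

lemma integral_eq_two_mul_integral_half {f : ℝ → ℝ} (hf : Continuous f) {c : ℝ}
    (hc : 0 ≤ c) (hsym : ∀ x : ℝ, 0 ≤ x → f (c - x) = f x) :
    ∫ x in (0 : ℝ)..c, f x = 2 * ∫ x in (0 : ℝ)..c / 2, f x := by
  have hreflect : ∫ x in c / 2..c, f x = ∫ x in (0 : ℝ)..c / 2, f x := by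
    have := integral_comp_sub_left f c (a := 0) (b := c / 2)
    rw [sub_zero, sub_half] at this
    rw [← this]
    refine integral_congr fun x hx => ?_
    rw [Set.uIcc_of_le (by positivity)] at hx
    exact hsym x hx.1
  rw [← integral_add_adjacent_intervals (hf.intervalIntegrable _ _) (hf.intervalIntegrable _ _),
    hreflect, two_mul]

lemma hasSum_integral_sinc_sq_add_int_mul_pi_mul {f : ℝ → ℝ} (hf : Continuous f) :
    HasSum (fun n : ℤ => ∫ x in (0 : ℝ)..π, sinc (x + n * π) ^ 2 * f x)
      (∫ x in (0 : ℝ)..π, f x) := by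
  have hIcc {x : ℝ} (hx : x ∈ Set.uIoc 0 π) : x ∈ Set.Icc 0 π := by
    rw [Set.uIoc_of_le pi_pos.le] at hx
    exact Set.Ioc_subset_Icc_self hx
  refine hasSum_integral_of_dominated_convergence
    (fun n x => 8 * (1 / (1 + (n : ℝ) ^ 2)) * |f x|) (fun n => by fun_prop)
    (fun n => ae_of_all _ fun x hx => ?_)
    (ae_of_all _ fun x _ => (summable_one_div_one_add_int_sq.mul_left 8).mul_right _) ?_
    (ae_of_all _ fun x hx => ?_)
  · rw [norm_mul, norm_of_nonneg (sq_nonneg _), norm_eq_abs, mul_one_div]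
    exact mul_le_mul_of_nonneg_right (sinc_sq_add_mul_pi_le (hIcc hx) n) (abs_nonneg _)
  · simp_rw [tsum_mul_right]
    exact (hf.abs.intervalIntegrable _ _).const_mul _
  · have := (summable_sinc_sq_add_int_mul_pi (hIcc hx)).hasSum.mul_right (f x)
    rwa [← sincSqSum, sincSqSum_eq_one (hIcc hx), one_mul] at this

lemma integral_sinc_sq_mul_eq_sum {f : ℝ → ℝ} (hf : Continuous f)
    (hper : ∀ x : ℝ, 0 ≤ x → f (x + π) = f x) (N : ℕ) :
    ∫ x in (0 : ℝ)..N * π, sinc x ^ 2 * f x =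
      ∑ k ∈ Finset.range N, ∫ x in (0 : ℝ)..π, sinc (x + k * π) ^ 2 * f x := by
  rw [integral_zero_nat_mul_eq_sum (by fun_prop)]
  refine Finset.sum_congr rfl fun k _ => integral_congr fun x hx => ?_
  rw [Set.uIcc_of_le pi_pos.le] at hx
  simp only [apply_add_nat_mul_of_nonneg pi_pos.le hper k hx.1]

lemma integral_sin_div_sq_mul_eq (f : ℝ → ℝ) (T : ℝ) :
    ∫ x in (0 : ℝ)..T, (sin x / x) ^ 2 * f x = ∫ x in (0 : ℝ)..T, sinc x ^ 2 * f x := by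
  refine integral_congr_ae ?_
  have hne : ∀ᵐ x : ℝ, x ≠ 0 := by simp [ae_iff, measure_singleton]
  filter_upwards [hne] with x hx _
  rw [sinc_of_ne_zero hx]

/-- If `f` is continuous, `π`-periodic and symmetric about `π/2` on `[0, ∞)`, and the
improper integral `∫₀^∞ (sin² x / x²) f x dx` converges to `I`, then
`I = ∫₀^{π/2} f x dx`. -/
theorem integral_sin_sq_div_sq_eq (f : ℝ → ℝ) (hf : Continuous f)
    (hper : ∀ x : ℝ, 0 ≤ x → f (x + π) = f x)
    (hsym : ∀ x : ℝ, 0 ≤ x → f (π - x) = f x)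
    (I : ℝ)
    (hI : Tendsto (fun T : ℝ => ∫ x in (0:ℝ)..T, (Real.sin x / x) ^ 2 * f x)
      atTop (nhds I)) :
    I = ∫ x in (0:ℝ)..(π / 2), f x := by
  set a : ℤ → ℝ := fun n => ∫ x in (0 : ℝ)..π, sinc (x + n * π) ^ 2 * f x
  have hreflect (k : ℕ) : a (-(k + 1)) = a k := by
    simp only [a]
    rw [integral_mul_comp_sub_eq pi_pos.le hsym]
    refine integral_congr fun x _ => ?_
    rw [← sinc_neg]
    push_cast
    ring_nf
  have hhalf : HasSum (fun k : ℕ => a k) (∫ x in (0 : ℝ)..π / 2, f x) := by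
    have := (hasSum_integral_sinc_sq_add_int_mul_pi_mul hf).nat_add_neg_add_one
    change HasSum (fun k : ℕ => a k + a (-(k + 1))) _ at this
    simp only [hreflect, integral_eq_two_mul_integral_half hf pi_pos.le hsym, ← two_mul] at this
    simpa using this.div_const 2
  have hpartial (N : ℕ) :
      ∫ x in (0 : ℝ)..N * π, (sin x / x) ^ 2 * f x = ∑ k ∈ Finset.range N, a k := by
    rw [integral_sin_div_sq_mul_eq, integral_sinc_sq_mul_eq_sum hf hper]
    rfl
  refine tendsto_nhds_unique ?_ hhalf.tendsto_sum_nat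
  exact (hI.comp (tendsto_natCast_atTop_atTop.atTop_mul_const pi_pos)).congr hpartial
end

section
/- Let f : ℝ → ℝ be a continuous function satisfying f(x + π) = f(x) and f(π − x) = f(x) for all x ≥ 0. Then the improper integral ∫₀^∞ (sin x / x) f(x) dx exists and equals ∫₀^{π/2} f(x) dx, i.e. the limit as T → ∞ of ∫₀^T (sin x / x) f(x) dx equals ∫₀^{π/2} f(x) dx. -/
open Real Filter MeasureTheory intervalIntegral

open Set Function Topology

/-!
Extend `f` to the even `π`-periodic function `g x = f |x|`. Cutting `[0, nπ + π/2]` into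
`[0, π/2]` and the blocks `[kπ - π/2, kπ + π/2]`, and folding each block onto `[0, π/2]`, gives
`∫₀^{nπ+π/2} (sin x / x) g x dx = ∫₀^{π/2} sin t · g t · c_n t dt`, where `c_n` are the partial
sums of the Mittag-Leffler expansion
`1 / sin t = 1 / t + ∑_{k ≥ 1} (-1)^k (1 / (t - kπ) + 1 / (t + kπ))`.
The alternating series test bounds `sin t · c_n t` uniformly, so dominated convergence yields
`∫₀^{π/2} g`; intermediate upper limits `T` only change the integral by `O(1 / T)`.
-/

section CscExpansion

local notation "ℂ_ℤ" => Complex.integerComplement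

open Complex in
lemma Complex.cot_half_sub_cot {z : ℂ} (hz : sin z ≠ 0) : cot (z / 2) - cot z = 1 / sin z := by
  obtain ⟨w, rfl⟩ : ∃ w, z = 2 * w := ⟨z / 2, by ring⟩
  rw [sin_two_mul] at hz
  have hs : sin w ≠ 0 := right_ne_zero_of_mul (left_ne_zero_of_mul hz)
  have hc : cos w ≠ 0 := right_ne_zero_of_mul hz
  rw [mul_div_cancel_left₀ w two_ne_zero, cot_eq_cos_div_sin, cot_eq_cos_div_sin, sin_two_mul,
    cos_two_mul]
  field_simp
  ring

lemma cotTerm_two_mul_add_one (x : ℂ) (i : ℕ) : cotTerm x (2 * i + 1) = cotTerm (x / 2) i / 2 := by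
  simp only [cotTerm, add_div, div_div]
  push_cast
  ring_nf

lemma div_two_mem_integerComplement {x : ℂ} (hx : x ∈ ℂ_ℤ) : x / 2 ∈ ℂ_ℤ := by
  rintro ⟨n, hn⟩
  exact hx ⟨2 * n, by push_cast; rw [hn]; ring⟩

lemma hasSum_cotTerm {x : ℂ} (hx : x ∈ ℂ_ℤ) :
    HasSum (cotTerm x) (π * Complex.cot (π * x) - 1 / x) := by
  rw [cot_series_rep' hx]
  exact (summable_cotTerm hx).hasSum

lemma hasSum_neg_one_pow_mul_cotTerm {x : ℂ} (hx : x ∈ ℂ_ℤ) :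
    HasSum (fun n ↦ (-1) ^ n * cotTerm x n) (1 / x - π / Complex.sin (π * x)) := by
  -- the odd-indexed terms form the cotangent series at `x / 2`, and `cot (z/2) - cot z = 1 / sin z`
  have hodd : HasSum (fun k ↦ cotTerm x (2 * k + 1))
      ((π * Complex.cot (π * (x / 2)) - 1 / (x / 2)) / 2) := by
    simp only [cotTerm_two_mul_add_one]
    exact (hasSum_cotTerm (div_two_mem_integerComplement hx)).div_const 2
  obtain ⟨even, heven⟩ : Summable (fun k ↦ cotTerm x (2 * k)) :=
    (summable_cotTerm hx).comp_injective (mul_right_injective₀ (two_ne_zero' ℕ))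
  have htot : π * Complex.cot (π * x) - 1 / x
      = even + (π * Complex.cot (π * (x / 2)) - 1 / (x / 2)) / 2 :=
    (hasSum_cotTerm hx).unique (heven.even_add_odd hodd)
  have halt := HasSum.even_add_odd (f := fun n ↦ (-1) ^ n * cotTerm x n)
      (by simpa only [pow_mul, neg_one_sq, one_pow, one_mul] using heven)
      (by simpa [pow_succ, pow_mul] using hodd.neg)
  convert halt using 1
  have hsin := sin_pi_mul_ne_zero hx
  rw [eq_sub_of_add_eq htot.symm, div_eq_mul_one_div (π : ℂ), ← Complex.cot_half_sub_cot hsin,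
    mul_div_assoc]
  have := Complex.integerComplement.ne_zero hx
  field_simp
  ring

noncomputable def cscPartialSum (n : ℕ) (t : ℝ) : ℝ :=
  1 / t + ∑ k ∈ Finset.range n, (-1) ^ (k + 1) * (1 / (t - (k + 1) * π) + 1 / (t + (k + 1) * π))

lemma tendsto_cscPartialSum {t : ℝ} (ht : sin t ≠ 0) :
    Tendsto (cscPartialSum · t) atTop (𝓝 (1 / sin t)) := by
  set x : ℂ := t / π
  have hπ : (π : ℂ) ≠ 0 := Complex.ofReal_ne_zero.mpr pi_ne_zero
  have hx : x ∈ ℂ_ℤ := by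
    rintro ⟨n, hn⟩
    apply ht
    have h : ((n * π : ℝ) : ℂ) = t := by push_cast; rw [hn, div_mul_cancel₀ _ hπ]
    rw [← Complex.ofReal_injective h, sin_int_mul_pi]
  have hsum := ((hasSum_neg_one_pow_mul_cotTerm hx).tendsto_sum_nat.const_sub (1 / x)).div_const π
  rw [← tendsto_ofReal_iff]
  convert hsum using 1
  · ext n
    simp only [cscPartialSum, cotTerm, x]
    push_cast
    rw [sub_div, Finset.sum_div, sub_eq_add_neg, ← Finset.sum_neg_distrib]
    congr 1
    · field_simp
    · refine Finset.sum_congr rfl fun k _ ↦ ?_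
      rw [div_add' _ _ _ hπ, div_sub' hπ, one_div_div, one_div_div, pow_succ]
      field_simp
  · have hsin : Complex.sin (π * x) = sin t := by
      simp only [x, mul_div_cancel₀ _ hπ, Complex.ofReal_sin]
    rw [hsin, sub_sub_cancel, div_div_cancel_left' hπ, Complex.ofReal_div, Complex.ofReal_one,
      one_div]

end CscExpansion

lemma sum_range_neg_one_pow_mul_mem_Icc {R : Type*} [Ring R] [LinearOrder R] [IsOrderedRing R]
    {b : ℕ → R} (hb : Antitone b) (hb0 : ∀ k, 0 ≤ b k) (n : ℕ) :
    ∑ k ∈ Finset.range n, (-1) ^ k * b k ∈ Icc 0 (b 0) := by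
  induction n generalizing b with
  | zero => simpa using hb0 0
  | succ n ih =>
    obtain ⟨hlo, hhi⟩ := ih (b := (b <| · + 1)) (fun _ _ h ↦ hb (by omega)) (fun k ↦ hb0 _)
    rw [Finset.sum_range_succ']
    simp only [pow_succ, mul_neg_one, neg_mul, Finset.sum_neg_distrib, pow_zero, one_mul,
      zero_add] at hhi ⊢
    exact ⟨by rw [neg_add_eq_sub, sub_nonneg]; exact hhi.trans (hb (Nat.zero_le 1)),
      add_le_of_nonpos_left (neg_nonpos.mpr hlo)⟩

lemma cscPartialSum_mem_Icc {t : ℝ} (ht0 : 0 < t) (htπ : t < π) (n : ℕ) :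
    cscPartialSum n t ∈ Icc (1 / t) (1 / t + (1 / (π - t) - 1 / (π + t))) := by
  set b : ℕ → ℝ := fun k ↦ 2 * t / (((k + 1) * π) ^ 2 - t ^ 2)
  have hden : ∀ k : ℕ, t ^ 2 < ((k + 1) * π) ^ 2 := fun k ↦ by
    have : π ≤ (k + 1) * π := le_mul_of_one_le_left pi_pos.le (by simp)
    nlinarith
  have hb : Antitone b := fun i j hij ↦ by
    have : ((i + 1) * π) ^ 2 ≤ ((j + 1) * π) ^ 2 := by gcongr
    exact div_le_div_of_nonneg_left (by positivity) (by linarith [hden i]) (by linarith)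
  have hb0 : ∀ k, 0 ≤ b k := fun k ↦ div_nonneg (by positivity) (by linarith [hden k])
  have hterm : ∀ k : ℕ, (-1) ^ (k + 1) * (1 / (t - (k + 1) * π) + 1 / (t + (k + 1) * π))
      = (-1) ^ k * b k := fun k ↦ by
    have ha : 0 < (k + 1) * π := by positivity
    have hk := hden k
    simp only [b, pow_succ, pow_zero, one_mul]
    generalize (k + 1) * π = a at ha hk ⊢
    have h1 : t - a ≠ 0 := by nlinarith
    have h2 : t + a ≠ 0 := by positivity
    have h3 : a ^ 2 - t ^ 2 ≠ 0 := by linarith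
    field_simp
    ring
  obtain ⟨hlo, hhi⟩ := sum_range_neg_one_pow_mul_mem_Icc hb hb0 n
  have hb0' : b 0 = 1 / (π - t) - 1 / (π + t) := by
    have h1 : π - t ≠ 0 := by linarith
    have h2 : π + t ≠ 0 := by linarith
    simp only [b, Nat.cast_zero, zero_add, one_mul]
    rw [div_sub_div _ _ h1 h2]
    congr 1 <;> ring
  simp only [cscPartialSum, hterm, hb0'] at hlo hhi ⊢
  constructor <;> linarith

lemma abs_sin_mul_cscPartialSum_le {t : ℝ} (ht : t ∈ Ioc 0 (π / 2)) (n : ℕ) :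
    |sin t * cscPartialSum n t| ≤ 2 := by
  obtain ⟨ht0, htπ⟩ := ht
  obtain ⟨hlo, hhi⟩ := cscPartialSum_mem_Icc ht0 (by linarith [pi_pos]) n
  have hsin0 : 0 ≤ sin t := sin_nonneg_of_nonneg_of_le_pi ht0.le (by linarith [pi_pos])
  have hsin : sin t ≤ t := sin_le ht0.le
  have hc0 : 0 ≤ cscPartialSum n t := le_trans (by positivity) hlo
  have htail : t * (1 / (π - t) - 1 / (π + t)) ≤ 1 := by
    have : 0 < π - t := by linarith [pi_pos]
    rw [div_sub_div _ _ this.ne' (by positivity), ← mul_div_assoc, div_le_one (by positivity)]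
    nlinarith
  rw [abs_of_nonneg (mul_nonneg hsin0 hc0)]
  calc sin t * cscPartialSum n t ≤ t * (1 / t + (1 / (π - t) - 1 / (π + t))) :=
        mul_le_mul hsin hhi hc0 ht0.le
    _ ≤ 2 := by rw [mul_add, mul_one_div_cancel ht0.ne']; linarith

lemma periodic_comp_abs {α : Type*} {f : ℝ → α} {c : ℝ} (hc : 0 ≤ c)
    (hper : ∀ x, 0 ≤ x → f (x + c) = f x) (hsym : ∀ x, 0 ≤ x → f (c - x) = f x) :
    Periodic (fun x ↦ f |x|) c := by
  intro x
  show f |x + c| = f |x|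
  rcases le_or_gt 0 x with hx | hx
  · rw [abs_of_nonneg hx, abs_of_nonneg (by linarith), hper x hx]
  rcases le_or_gt 0 (x + c) with hxc | hxc
  · rw [abs_of_nonneg hxc, abs_of_neg hx, ← hsym (-x) (by linarith), sub_neg_eq_add, add_comm]
  · rw [abs_of_neg hxc, abs_of_neg hx, ← hper (-(x + c)) (by linarith)]
    ring_nf

lemma intervalIntegrable_sin_div_mul {g : ℝ → ℝ} (hg : Continuous g) (a b : ℝ) :
    IntervalIntegrable (fun x ↦ sin x / x * g x) volume a b := by
  refine ((continuous_sinc.mul hg).intervalIntegrable a b).congr_ae (ae_restrict_of_ae ?_)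
  refine measure_mono_null (fun x hx ↦ ?_) (measure_singleton (0 : ℝ))
  by_contra h0
  exact hx (by simp [sinc_of_ne_zero (mt mem_singleton_iff.mpr h0)])

lemma integral_sub_add_eq_integral_comp_add_add_comp_sub {E : Type*} [NormedAddCommGroup E]
    [NormedSpace ℝ E] {F : ℝ → E} (hF : ∀ a b, IntervalIntegrable F volume a b) (c h : ℝ) :
    ∫ x in (c - h)..(c + h), F x = ∫ t in 0..h, (F (c + t) + F (c - t)) := by
  have hadd : IntervalIntegrable (fun t ↦ F (c + t)) volume 0 h := by
    simpa using (hF c (c + h)).comp_add_left c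
  have hsub : IntervalIntegrable (fun t ↦ F (c - t)) volume 0 h := by
    simpa using (hF c (c - h)).comp_sub_left c
  rw [integral_add hadd hsub, integral_comp_add_left, integral_comp_sub_left, add_zero, sub_zero,
    add_comm (∫ x in c..c + h, F x), integral_add_adjacent_intervals (hF _ _) (hF _ _)]

section EvenPeriodic

variable {g : ℝ → ℝ}

lemma sin_div_mul_add_sin_div_mul_of_periodic_of_even (hper : Periodic g π) (heven : g.Even)
    (m : ℕ) (t : ℝ) :
    sin (m * π + t) / (m * π + t) * g (m * π + t) + sin (m * π - t) / (m * π - t) * g (m * π - t)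
      = sin t * g t * ((-1) ^ m * (1 / (t - m * π) + 1 / (t + m * π))) := by
  rw [add_comm (m * π : ℝ) t, sin_add_nat_mul_pi, sin_nat_mul_pi_sub, hper.nat_mul m t,
    hper.nat_mul_sub_eq, heven, ← neg_sub t, div_neg]
  ring

lemma integral_sin_div_mul_eq_integral_mul_cscPartialSum (hg : Continuous g) (hper : Periodic g π)
    (heven : g.Even) (n : ℕ) :
    ∫ x in 0..(n * π + π / 2), sin x / x * g x
      = ∫ t in 0..(π / 2), sin t * g t * cscPartialSum n t := by
  set F : ℝ → ℝ := fun x ↦ sin x / x * g x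
  have hF := intervalIntegrable_sin_div_mul hg
  have hblock (k : ℕ) : IntervalIntegrable
      (fun t ↦ F ((k + 1) * π + t) + F ((k + 1) * π - t)) volume 0 (π / 2) := by
    set c : ℝ := (k + 1) * π
    refine IntervalIntegrable.add ?_ ?_
    · simpa using (hF c (c + π / 2)).comp_add_left c
    · simpa using (hF c (c - π / 2)).comp_sub_left c
  have hsum : IntervalIntegrable
      (fun t ↦ ∑ k ∈ Finset.range n, (F ((k + 1) * π + t) + F ((k + 1) * π - t)))
      volume 0 (π / 2) := by
    simpa only [Finset.sum_fn] using IntervalIntegrable.sum _ fun k _ ↦ hblock k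
  have hblocks : ∫ x in (π / 2)..(n * π + π / 2), F x
      = ∑ k ∈ Finset.range n, ∫ t in 0..(π / 2), (F ((k + 1) * π + t) + F ((k + 1) * π - t)) := by
    have := sum_integral_adjacent_intervals (a := fun k : ℕ ↦ k * π + π / 2) (n := n)
      fun k _ ↦ hF _ _
    simp only [Nat.cast_zero, zero_mul, zero_add] at this
    rw [← this]
    refine Finset.sum_congr rfl fun k _ ↦ ?_
    rw [← integral_sub_add_eq_integral_comp_add_add_comp_sub hF]
    congr 1 <;> push_cast <;> ring
  rw [← integral_add_adjacent_intervals (hF 0 (π / 2)) (hF _ _), hblocks,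
    ← intervalIntegral.integral_finsetSum fun k _ ↦ hblock k, ← integral_add (hF _ _) hsum]
  refine integral_congr fun t _ ↦ ?_
  rw [cscPartialSum, mul_add, Finset.mul_sum]
  congr 1
  · ring
  · refine Finset.sum_congr rfl fun k _ ↦ ?_
    have := sin_div_mul_add_sin_div_mul_of_periodic_of_even hper heven (k + 1) t
    push_cast at this
    rw [this]

lemma tendsto_integral_mul_cscPartialSum (hg : Continuous g) :
    Tendsto (fun n ↦ ∫ t in 0..(π / 2), sin t * g t * cscPartialSum n t) atTop
      (𝓝 (∫ t in 0..(π / 2), g t)) := by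
  have hIoc : uIoc 0 (π / 2) = Ioc 0 (π / 2) := uIoc_of_le (by positivity)
  refine tendsto_integral_filter_of_dominated_convergence (fun t ↦ 2 * |g t|)
    (Eventually.of_forall fun n ↦ ?_) (Eventually.of_forall fun n ↦ ?_)
    ((hg.abs.const_mul 2).intervalIntegrable _ _) ?_
  · unfold cscPartialSum
    fun_prop
  · refine Eventually.of_forall fun t ht ↦ ?_
    rw [hIoc] at ht
    rw [Real.norm_eq_abs, mul_right_comm, abs_mul]
    exact mul_le_mul_of_nonneg_right (abs_sin_mul_cscPartialSum_le ht n) (abs_nonneg _)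
  · refine Eventually.of_forall fun t ht ↦ ?_
    rw [hIoc] at ht
    have hsin : sin t ≠ 0 := (sin_pos_of_pos_of_lt_pi ht.1 (by linarith [ht.2, pi_pos])).ne'
    simpa [mul_right_comm _ (g t), hsin] using (tendsto_cscPartialSum hsin).const_mul (sin t * g t)

lemma norm_integral_sin_div_mul_le {M r a b : ℝ} (hM : ∀ x, |g x| ≤ M) (hr : 0 < r) (ha : r ≤ a)
    (hb : r ≤ b) : ‖∫ x in a..b, sin x / x * g x‖ ≤ M / r * |b - a| := by
  refine norm_integral_le_of_norm_le_const fun x hx ↦ ?_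
  have hx : r ≤ x := (le_min ha hb).trans (uIoc_subset_uIcc hx).1
  have hx0 : 0 < x := hr.trans_le hx
  rw [Real.norm_eq_abs, abs_mul, abs_div, abs_of_pos hx0]
  calc |sin x| / x * |g x| ≤ 1 / r * M := by
        gcongr
        · exact abs_sin_le_one x
        · exact hM x
    _ = M / r := by ring

theorem tendsto_integral_sin_div_mul_of_periodic_of_even (hg : Continuous g) (hper : Periodic g π)
    (heven : g.Even) :
    Tendsto (fun T ↦ ∫ x in 0..T, sin x / x * g x) atTop (𝓝 (∫ x in 0..(π / 2), g x)) := by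
  obtain ⟨M, hM⟩ := isBounded_iff_forall_norm_le.mp (hper.isBounded_of_continuous pi_ne_zero hg)
  have hM' : ∀ x, |g x| ≤ M := fun x ↦ hM _ (mem_range_self x)
  have hM0 : 0 ≤ M := (abs_nonneg _).trans (hM' 0)
  set N : ℝ → ℕ := fun T ↦ ⌊T / π⌋₊
  have hN : Tendsto N atTop atTop :=
    tendsto_nat_floor_atTop.comp (tendsto_id.atTop_div_const pi_pos)
  have hseq : Tendsto (fun n : ℕ ↦ ∫ x in 0..(n * π + π / 2), sin x / x * g x) atTop
      (𝓝 (∫ x in 0..(π / 2), g x)) := by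
    simpa only [integral_sin_div_mul_eq_integral_mul_cscPartialSum hg hper heven]
      using tendsto_integral_mul_cscPartialSum hg
  have htail : Tendsto (fun T ↦ (∫ x in 0..T, sin x / x * g x)
      - ∫ x in 0..(N T * π + π / 2), sin x / x * g x) atTop (𝓝 0) := by
    refine squeeze_zero_norm' ?_ ((tendsto_const_nhds (x := M)).div_atTop
      (tendsto_natCast_atTop_atTop.comp hN))
    filter_upwards [eventually_ge_atTop π] with T hT
    have hN1 : (1 : ℝ) ≤ N T := by
      exact_mod_cast Nat.le_floor (by exact_mod_cast (one_le_div pi_pos).mpr hT)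
    have hNT : N T * π ≤ T :=
      (le_div_iff₀ pi_pos).mp (Nat.floor_le (div_nonneg (by linarith [pi_pos]) pi_pos.le))
    have hTN : T < (N T + 1) * π := (div_lt_iff₀ pi_pos).mp (Nat.lt_floor_add_one _)
    rw [integral_interval_sub_left (intervalIntegrable_sin_div_mul hg _ _)
      (intervalIntegrable_sin_div_mul hg _ _)]
    calc _ ≤ M / (N T * π) * |T - (N T * π + π / 2)| :=
          norm_integral_sin_div_mul_le hM' (mul_pos (by linarith) pi_pos) (by linarith [pi_pos]) hNT
      _ ≤ M / (N T * π) * π := by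
          gcongr
          rw [abs_le]
          constructor <;> linarith [pi_pos]
      _ = M / N T := by field_simp
  simpa using (hseq.comp hN).add htail

end EvenPeriodic

/-- If `f` is continuous, `π`-periodic and symmetric about `π/2` on `[0, ∞)`, then the
improper integral `∫₀^∞ (sin x / x) f x dx` exists and equals `∫₀^{π/2} f x dx`. -/
theorem integral_sin_div_id_mul_eq (f : ℝ → ℝ) (hf : Continuous f)
    (hper : ∀ x : ℝ, 0 ≤ x → f (x + π) = f x)
    (hsym : ∀ x : ℝ, 0 ≤ x → f (π - x) = f x) :
    Tendsto (fun T : ℝ => ∫ x in (0:ℝ)..T, (Real.sin x / x) * f x)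
      atTop (nhds (∫ x in (0:ℝ)..(π / 2), f x)) := by
  have habs {b : ℝ} (hb : 0 ≤ b) : ∀ x ∈ uIcc 0 b, f |x| = f x := fun x hx ↦ by
    rw [uIcc_of_le hb] at hx
    rw [abs_of_nonneg hx.1]
  have h := tendsto_integral_sin_div_mul_of_periodic_of_even (g := fun x ↦ f |x|)
    (hf.comp continuous_abs) (periodic_comp_abs pi_pos.le hper hsym) fun x ↦ congrArg f (abs_neg x)
  rw [integral_congr (habs (by positivity))] at h
  refine h.congr' ?_
  filter_upwards [eventually_ge_atTop 0] with T hT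
  exact integral_congr fun x hx ↦ by simp only [habs hT x hx]
end

section
/- For every real α that is not an integer multiple of π, one has 1/sin²α = 1/α² + Σ_{m=1}^∞ (1/(α − mπ)² + 1/(α + mπ)²); equivalently, 1/sin²α = Σ_{m∈ℤ} 1/(α + mπ)², where the series converges absolutely. -/
/-!
Differentiate Euler's partial fraction expansion
`π cot (π x) = 1 / x + ∑_{n ≥ 1} (1 / (x - n) + 1 / (x + n))` term by term at a non-integer
`x`: near such an `x` the derivatives `1 / (y ∓ n)²` are dominated by `4 / (x ∓ n)²`, which is
summable. This gives `π² / sin² (π x) = ∑_{m ∈ ℤ} 1 / (x + m)²`, and `x = α / π` rescales it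
to the claim.
-/

open Real Metric

theorem Real.hasSum_cot_series {x : ℝ} (hx : ∀ k : ℤ, x ≠ k) :
    HasSum (fun n : ℕ => 1 / (x - (n + 1)) + 1 / (x + (n + 1))) (π * cot (π * x) - 1 / x) := by
  have hxC : (x : ℂ) ∈ Complex.integerComplement := by
    rintro ⟨k, hk⟩
    exact hx k (by exact_mod_cast hk.symm)
  rw [← Complex.hasSum_ofReal]
  convert (summable_cotTerm hxC).hasSum using 1
  · ext n; push_cast; rfl
  · rw [← cot_series_rep' hxC]; push_cast [Complex.ofReal_cot]; rfl

theorem Real.hasDerivAt_cot {x : ℝ} (hx : sin x ≠ 0) : HasDerivAt cot (-1 / sin x ^ 2) x := by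
  rw [show cot = cos / sin from funext cot_eq_cos_div_sin]
  refine ((hasDerivAt_cos x).div (hasDerivAt_sin x) hx).congr_deriv ?_
  rw [← sin_sq_add_cos_sq x]
  ring

theorem Real.hasDerivAt_pi_mul_cot_pi_mul_sub_one_div {x : ℝ} (hx : ∀ k : ℤ, x ≠ k) :
    HasDerivAt (fun y => π * cot (π * y) - 1 / y)
      (-(π ^ 2 / sin (π * x) ^ 2 - 1 / x ^ 2)) x := by
  have hsin : sin (π * x) ≠ 0 := by
    rw [mul_comm, Ne, sin_eq_zero_iff]
    rintro ⟨k, hk⟩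
    exact hx k (mul_right_cancel₀ pi_ne_zero hk.symm)
  have hcot := ((hasDerivAt_cot hsin).comp x ((hasDerivAt_id x).const_mul π)).const_mul π
  simp only [one_div]
  exact (hcot.fun_sub (hasDerivAt_inv (by exact_mod_cast hx 0))).congr_deriv (by ring)

theorem hasDerivAt_one_div_sub_add_one_div_add {y c : ℝ} (h₁ : y - c ≠ 0) (h₂ : y + c ≠ 0) :
    HasDerivAt (fun z => 1 / (z - c) + 1 / (z + c))
      (-(1 / (y - c) ^ 2 + 1 / (y + c) ^ 2)) y := by
  simp only [one_div]
  exact ((((hasDerivAt_id y).sub_const c).fun_inv h₁).fun_add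
    (((hasDerivAt_id y).add_const c).fun_inv h₂)).congr_deriv (by simp only [id]; ring)

theorem exists_pos_le_abs_sub_intCast {x : ℝ} (hx : ∀ k : ℤ, x ≠ k) :
    ∃ δ > 0, ∀ k : ℤ, δ ≤ |x - k| := by
  have hx' := Int.floor_add_fract x
  have hfract : 0 < Int.fract x :=
    (Int.fract_nonneg x).lt_of_ne fun h => hx ⌊x⌋ (by linarith)
  refine ⟨min (Int.fract x) (1 - Int.fract x), lt_min hfract (by linarith [Int.fract_lt_one x]),
    fun k => ?_⟩
  rcases le_or_gt k ⌊x⌋ with hk | hk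
  · have : (k : ℝ) ≤ ⌊x⌋ := by exact_mod_cast hk
    rw [abs_of_nonneg (by linarith)]
    linarith [min_le_left (Int.fract x) (1 - Int.fract x)]
  · have : (⌊x⌋ : ℝ) + 1 ≤ k := by exact_mod_cast hk
    rw [abs_of_neg (by linarith [Int.fract_lt_one x])]
    linarith [min_le_right (Int.fract x) (1 - Int.fract x)]

theorem one_div_sub_sq_le_four_div_sub_sq {x y c δ : ℝ} (hx : 2 * δ ≤ |x - c|)
    (hy : |y - x| < δ) : 1 / (y - c) ^ 2 ≤ 4 / (x - c) ^ 2 := by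
  have hxy : |x - c| ≤ 2 * |y - c| := by linarith [abs_sub_le x y c, abs_sub_comm x y]
  have hx0 : 0 < |x - c| := by linarith [abs_nonneg (y - x)]
  have hy0 : 0 < |y - c| := by linarith
  rw [← sq_abs (x - c), ← sq_abs (y - c), div_le_div_iff₀ (by positivity) (by positivity)]
  nlinarith

theorem one_div_sub_sq_add_one_div_add_sq_le {x y c δ : ℝ} (hx₁ : 2 * δ ≤ |x - c|)
    (hx₂ : 2 * δ ≤ |x + c|) (hy : |y - x| < δ) :
    1 / (y - c) ^ 2 + 1 / (y + c) ^ 2 ≤ 4 / (x - c) ^ 2 + 4 / (x + c) ^ 2 := by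
  rw [← sub_neg_eq_add] at hx₂
  refine add_le_add (one_div_sub_sq_le_four_div_sub_sq hx₁ hy) ?_
  simpa only [sub_neg_eq_add] using one_div_sub_sq_le_four_div_sub_sq hx₂ hy

theorem summable_one_div_add_natCast_add_one_sq (x : ℝ) :
    Summable fun n : ℕ => 1 / (x + (n + 1)) ^ 2 := by
  refine ((summable_one_div_nat_add_rpow (x + 1) 2).mpr one_lt_two).congr fun n => ?_
  rw [rpow_two, sq_abs]
  ring_nf

theorem Real.hasSum_pi_sq_div_sin_sq_sub_one_div_sq {x : ℝ} (hx : ∀ k : ℤ, x ≠ k) :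
    HasSum (fun n : ℕ => 1 / (x - (n + 1)) ^ 2 + 1 / (x + (n + 1)) ^ 2)
      (π ^ 2 / sin (π * x) ^ 2 - 1 / x ^ 2) := by
  obtain ⟨ε, hε, hdist⟩ := exists_pos_le_abs_sub_intCast hx
  have hball : ∀ y ∈ ball x (ε / 2), ∀ k : ℤ, y ≠ k := by
    intro y hy k hk
    rw [mem_ball, Real.dist_eq, hk, abs_sub_comm] at hy
    linarith [hdist k]
  set g : ℕ → ℝ → ℝ := fun n y => 1 / (y - (n + 1)) + 1 / (y + (n + 1))
  set g' : ℕ → ℝ → ℝ := fun n y => -(1 / (y - (n + 1)) ^ 2 + 1 / (y + (n + 1)) ^ 2)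
  set u : ℕ → ℝ := fun n => 4 / (x - (n + 1)) ^ 2 + 4 / (x + (n + 1)) ^ 2
  have hg : ∀ n, ∀ y ∈ ball x (ε / 2), HasDerivAt (g n) (g' n y) y := by
    intro n y hy
    refine hasDerivAt_one_div_sub_add_one_div_add
      (sub_ne_zero.mpr (by exact_mod_cast hball y hy (n + 1))) ?_
    rw [← sub_neg_eq_add]
    exact sub_ne_zero.mpr (by exact_mod_cast hball y hy (-(n + 1)))
  have hg' : ∀ n, ∀ y ∈ ball x (ε / 2), ‖g' n y‖ ≤ u n := by
    intro n y hy
    rw [mem_ball, Real.dist_eq] at hy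
    have h₁ := hdist (n + 1)
    have h₂ := hdist (-(n + 1))
    push_cast at h₁ h₂
    rw [sub_neg_eq_add] at h₂
    rw [norm_neg, Real.norm_of_nonneg (by positivity)]
    exact one_div_sub_sq_add_one_div_add_sq_le (by linarith) (by linarith) hy
  have hu : Summable u := by
    refine (((summable_one_div_add_natCast_add_one_sq (-x)).add
      (summable_one_div_add_natCast_add_one_sq x)).mul_left 4).congr fun n => ?_
    ring
  have hderiv : HasDerivAt (fun y => ∑' n, g n y) (∑' n, g' n x) x :=
    hasDerivAt_tsum_of_isPreconnected hu isOpen_ball (convex_ball x _).isPreconnected hg hg'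
      (mem_ball_self (by positivity)) (hasSum_cot_series hx).summable
      (mem_ball_self (by positivity))
  have hcot : (fun y => ∑' n, g n y) =ᶠ[nhds x] fun y => π * cot (π * y) - 1 / y :=
    Filter.eventually_of_mem (ball_mem_nhds x (by positivity)) fun y hy =>
      (hasSum_cot_series (hball y hy)).tsum_eq
  have htsum := hderiv.unique
    ((hasDerivAt_pi_mul_cot_pi_mul_sub_one_div hx).congr_of_eventuallyEq hcot)
  have hs : Summable fun n => g' n x :=
    .of_norm_bounded hu fun n => hg' n x (mem_ball_self (by positivity))
  have h := hs.hasSum.neg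
  rw [htsum, neg_neg] at h
  simpa [g'] using h

theorem HasSum.of_add_one_add_neg_add_one {G : Type*} [AddCommMonoid G] [TopologicalSpace G]
    [ContinuousAdd G] [T2Space G] {f : ℤ → G} {a : G}
    (h : HasSum (fun n : ℕ => f (n + 1) + f (-(n + 1))) a)
    (h₁ : Summable fun n : ℕ => f (n + 1)) (h₂ : Summable fun n : ℕ => f (-(n + 1))) :
    HasSum f (a + f 0) := by
  rw [h.unique (h₁.hasSum.add h₂.hasSum), add_right_comm]
  exact h₁.hasSum.of_add_one_of_neg_add_one h₂.hasSum

theorem Real.hasSum_int_one_div_add_sq {x : ℝ} (hx : ∀ k : ℤ, x ≠ k) :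
    HasSum (fun m : ℤ => 1 / (x + m) ^ 2) (π ^ 2 / sin (π * x) ^ 2) := by
  set f : ℤ → ℝ := fun m => 1 / (x + m) ^ 2
  have hpair : HasSum (fun n : ℕ => f (n + 1) + f (-(n + 1)))
      (π ^ 2 / sin (π * x) ^ 2 - 1 / x ^ 2) := by
    convert hasSum_pi_sq_div_sin_sq_sub_one_div_sq hx using 2 with n
    simp only [f]
    push_cast
    ring
  have hpos : Summable fun n : ℕ => f (n + 1) := by
    convert summable_one_div_add_natCast_add_one_sq x using 2
    simp [f]
  have hneg : Summable fun n : ℕ => f (-(n + 1)) := by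
    convert summable_one_div_add_natCast_add_one_sq (-x) using 2
    simp only [f]
    push_cast
    ring
  convert hpair.of_add_one_add_neg_add_one hpos hneg using 1
  simp [f]

/-- Partial fraction expansion of `1 / sin² α`: for `α` not an integer multiple of `π`,
`1 / sin² α = 1/α² + ∑_{m=1}^∞ (1/(α - mπ)² + 1/(α + mπ)²)`, equivalently
`1 / sin² α = ∑_{m ∈ ℤ} 1/(α + mπ)²`. -/
theorem one_div_sin_sq_eq_sum (α : ℝ) (hα : ∀ k : ℤ, α ≠ k * π) :
    HasSum
      (fun m : ℕ => 1 / (α - (m + 1 : ℕ) * π) ^ 2 + 1 / (α + (m + 1 : ℕ) * π) ^ 2)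
      (1 / Real.sin α ^ 2 - 1 / α ^ 2)
    ∧ HasSum (fun m : ℤ => 1 / (α + m * π) ^ 2) (1 / Real.sin α ^ 2) := by
  have hπ := pi_ne_zero
  have hx : ∀ k : ℤ, α / π ≠ k := fun k h => hα k (by rw [← h, div_mul_cancel₀ _ hπ])
  have hscale (t : ℝ) : 1 / π ^ 2 * (1 / (α / π + t) ^ 2) = 1 / (α + t * π) ^ 2 := by
    field_simp
  have hsin : 1 / π ^ 2 * (π ^ 2 / sin (π * (α / π)) ^ 2) = 1 / sin α ^ 2 := by
    rw [mul_div_cancel₀ _ hπ]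
    field_simp
  constructor
  · have h := (hasSum_pi_sq_div_sin_sq_sub_one_div_sq hx).mul_left (1 / π ^ 2)
    rw [mul_sub, hsin, show 1 / π ^ 2 * (1 / (α / π) ^ 2) = 1 / α ^ 2 by simpa using hscale 0]
      at h
    refine h.congr_fun fun n => ?_
    rw [mul_add, sub_eq_add_neg (α / π), hscale, hscale]
    push_cast
    ring
  · have h := (hasSum_int_one_div_add_sq hx).mul_left (1 / π ^ 2)
    rw [hsin] at h
    exact h.congr_fun fun m => (hscale m).symm
end

section
/- For every positive integer n, the improper integral ∫₀^∞ (sin^{2n+1}x / x) dx exists and equals ((2n−1)!! / (2n)!!) · (π/2), where (2n−1)!! = 1·3·5⋯(2n−1) and (2n)!! = 2·4·6⋯(2n). -/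
/-!
`sin x ^ (2n+1)` is a real combination of the odd sines `sin ((2m+1) x)`, by induction on `n`:
multiplying `sin ((2m+1) x)` by `sin x ^ 2` gives a combination of `sin ((2m-1) x)`,
`sin ((2m+1) x)` and `sin ((2m+3) x)`. By Dirichlet's integral each odd sine `f` satisfies
`∫₀^∞ f x / x = π / 2 = ½ ∫₀^π f x / sin x`, the last integrand being a Dirichlet kernel. Both
sides are linear in `f`, so for `f = sin ^ (2n+1)` the improper integral is half of Wallis'
integral `∫₀^π sin x ^ (2n) dx = (2n-1)‼ / (2n)‼ · π`.

Dirichlet's integral itself converges by an integration by parts against `1 / x`; its value is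
found along the sequence `T = (k + 1/2) π`, where after the substitution `x = (k + 1/2) t` the
Dirichlet kernel `sin ((k + 1/2) t) / sin (t / 2)` contributes `π / 2` and the remainder vanishes
in the limit by the Riemann–Lebesgue lemma.
-/

open Real Filter MeasureTheory intervalIntegral Nat

open scoped Topology FourierTransform

open Finset in
noncomputable def dirichletKernel (k : ℕ) (t : ℝ) : ℝ :=
  1 + 2 * ∑ j ∈ range k, cos ((j + 1) * t)

namespace dirichletKernel

lemma continuous (k : ℕ) : Continuous (dirichletKernel k) := by
  unfold dirichletKernel; fun_prop

lemma sin_half_mul (k : ℕ) (t : ℝ) :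
    sin (t / 2) * dirichletKernel k t = sin ((k + 1 / 2) * t) := by
  induction k with
  | zero => simp [dirichletKernel, div_eq_inv_mul]
  | succ k ih =>
    have hprod : 2 * sin (t / 2) * cos ((k + 1) * t) =
        sin ((k + 1 + 1 / 2) * t) - sin ((k + 1 / 2) * t) := by
      rw [show (k + 1 + 1 / 2) * t = (k + 1) * t + t / 2 by ring,
        show (k + 1 / 2) * t = (k + 1) * t - t / 2 by ring, sin_add, sin_sub]
      ring
    simp only [dirichletKernel, Finset.sum_range_succ] at ih ⊢
    push_cast
    linear_combination ih + hprod

lemma integral_natCast_mul_pi (k c : ℕ) :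
    ∫ t in 0..c * π, dirichletKernel k t = c * π := by
  have hcos (j : ℕ) : ∫ t in 0..c * π, cos ((j + 1) * t) = 0 := by
    rw [integral_comp_mul_left cos (by positivity), integral_cos, mul_zero, sin_zero,
      ← mul_assoc, show ((j : ℝ) + 1) * c = ((j + 1) * c : ℕ) by push_cast; ring,
      sin_nat_mul_pi, sub_zero, smul_zero]
  have hint (j : ℕ) : IntervalIntegrable (fun t ↦ cos ((j + 1) * t)) volume 0 (c * π) :=
    (by fun_prop : Continuous fun t ↦ cos ((j + 1) * t)).intervalIntegrable _ _
  unfold dirichletKernel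
  rw [integral_add intervalIntegrable_const (Continuous.intervalIntegrable (by fun_prop) _ _),
    intervalIntegral.integral_const_mul, intervalIntegral.integral_finsetSum fun j _ ↦ hint j]
  simp [hcos]

end dirichletKernel

/-- The Riemann–Lebesgue lemma for the sine transform, read off from the imaginary part of the
Fourier transform. -/
lemma tendsto_integral_sin_mul_atTop {g : ℝ → ℝ} (hg : Integrable g) :
    Tendsto (fun l ↦ ∫ t, sin (l * t) * g t) atTop (𝓝 0) := by
  have hF : Tendsto (fun l ↦ 𝓕 (fun v ↦ (g v : ℂ)) (l / (2 * π))) atTop (𝓝 0) :=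
    (Real.zero_at_infty_fourier _).comp
      ((tendsto_id.atTop_div_const (by positivity)).mono_right atTop_le_cocompact)
  have him (l : ℝ) : (𝓕 (fun v ↦ (g v : ℂ)) (l / (2 * π))).im = -∫ t, sin (l * t) * g t := by
    have hphase (t : ℝ) : -2 * π * t * (l / (2 * π)) = -(l * t) := by field_simp
    simp_rw [Real.fourier_real_eq_integral_exp_smul, hphase]
    refine (integral_im (𝕜 := ℂ) ?_).symm.trans ?_
    · refine hg.ofReal.bdd_mul (c := 1) (by fun_prop) (Eventually.of_forall fun t ↦ ?_)
      rw [Complex.norm_exp_ofReal_mul_I]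
    · rw [← MeasureTheory.integral_neg]
      congr 1 with t
      rw [smul_eq_mul, RCLike.im_to_complex, Complex.im_mul_ofReal,
        Complex.exp_ofReal_mul_I_im, sin_neg, neg_mul]
  simpa [him] using (Complex.continuous_im.tendsto 0).comp hF |>.neg

lemma intervalIntegrable_sin_mul_div (c a b : ℝ) :
    IntervalIntegrable (fun x ↦ sin (c * x) / x) volume a b := by
  refine (intervalIntegrable_const (c := |c|)).mono_fun
    (Measurable.aestronglyMeasurable (by fun_prop)) (ae_of_all _ fun x ↦ ?_)
  change ‖sin (c * x) / x‖ ≤ ‖|c|‖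
  rcases eq_or_ne x 0 with rfl | hx
  · simp
  · rw [norm_div, Real.norm_eq_abs, Real.norm_eq_abs, Real.norm_eq_abs, abs_abs,
      div_le_iff₀ (abs_pos.2 hx), ← abs_mul]
    exact abs_sin_le_abs

lemma integral_sin_mul_div_eq_integral_sin_div (c T : ℝ) :
    ∫ x in 0..T, sin (c * x) / x = ∫ x in 0..c * T, sin x / x := by
  have h := mul_integral_comp_mul_left (a := 0) (b := T) (f := fun y ↦ sin y / y) c
  rw [mul_zero, ← intervalIntegral.integral_const_mul] at h
  rw [← h]
  refine intervalIntegral.integral_congr fun x _ ↦ ?_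
  rcases eq_or_ne c 0 with rfl | hc
  · simp
  · rw [mul_div_assoc', mul_div_mul_left _ _ hc]

lemma abs_inv_sub_inv_sin_le {u : ℝ} (hu : 0 < u) (hu' : u ≤ π / 2) :
    |u⁻¹ - (sin u)⁻¹| ≤ π * u / 12 := by
  have hsin : 2 / π * u ≤ sin u := mul_le_sin hu.le hu'
  have hsin_pos : 0 < sin u := lt_of_lt_of_le (by positivity) hsin
  have hcube := sin_gt_sub_cube hu
  rw [abs_sub_comm, abs_of_nonneg (sub_nonneg.2 (inv_anti₀ hsin_pos (sin_lt hu).le)),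
    inv_sub_inv hsin_pos.ne' hu.ne', div_le_div_iff₀ (by positivity) (by norm_num)]
  have hlower : 2 * u * u ≤ π * (u * sin u) := by
    rw [div_mul_eq_mul_div, div_le_iff₀ pi_pos] at hsin; nlinarith
  nlinarith [pi_pos]

lemma tendsto_integral_sin_div_nat_add_half_mul_pi :
    Tendsto (fun k : ℕ ↦ ∫ x in 0..(k + 1 / 2) * π, sin x / x) atTop (𝓝 (π / 2)) := by
  set g : ℝ → ℝ := fun t ↦ t⁻¹ - (2 * sin (t / 2))⁻¹
  have hg : IntegrableOn g (Set.Ioc 0 π) := by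
    refine Measure.integrableOn_of_bounded (M := π * π / 24) measure_Ioc_lt_top.ne
      (by fun_prop) ((ae_restrict_iff' measurableSet_Ioc).2 (ae_of_all _ fun t ht ↦ ?_))
    have key := abs_inv_sub_inv_sin_le (u := t / 2) (by linarith [ht.1]) (by linarith [ht.2])
    have hg_eq : g t = (t / 2)⁻¹ / 2 - (sin (t / 2))⁻¹ / 2 := by
      simp only [g, mul_inv, inv_div]; ring
    rw [Real.norm_eq_abs, hg_eq, ← sub_div, abs_div, abs_two, div_le_iff₀ two_pos]
    nlinarith [ht.2, pi_pos]
  have hRL : Tendsto (fun l ↦ ∫ t in 0..π, sin (l * t) * g t) atTop (𝓝 0) := by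
    refine (tendsto_integral_sin_mul_atTop (hg.integrable_indicator measurableSet_Ioc)).congr
      fun l ↦ ?_
    rw [intervalIntegral.integral_of_le pi_pos.le,
      ← MeasureTheory.integral_indicator measurableSet_Ioc]
    simp_rw [Set.indicator_mul_right]
  have hsplit (k : ℕ) : ∫ x in 0..(k + 1 / 2) * π, sin x / x
      = π / 2 + ∫ t in 0..π, sin ((k + 1 / 2) * t) * g t := by
    have hpt : Set.EqOn (fun t ↦ sin ((k + 1 / 2) * t) / t)
        (fun t ↦ dirichletKernel k t / 2 + sin ((k + 1 / 2) * t) * g t) (Set.uIoo 0 π) := by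
      intro t ht
      rw [Set.uIoo_of_le pi_pos.le] at ht
      have hsin : sin (t / 2) ≠ 0 := (sin_pos_of_pos_of_lt_pi (by linarith [ht.1])
        (by linarith [ht.2, pi_pos])).ne'
      simp only [g, ← dirichletKernel.sin_half_mul]
      field_simp
      ring
    have hkernel : ∫ t in 0..π, dirichletKernel k t = π := by
      simpa using dirichletKernel.integral_natCast_mul_pi k 1
    rw [← integral_sin_mul_div_eq_integral_sin_div, integral_congr_uIoo hpt,
      intervalIntegral.integral_add, intervalIntegral.integral_div, hkernel]
    · exact ((dirichletKernel.continuous k).intervalIntegrable _ _).div_const _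
    · refine (intervalIntegrable_iff_integrableOn_Ioc_of_le pi_pos.le).2 ?_
      exact hg.bdd_mul (c := 1) (by fun_prop) (ae_of_all _ fun t ↦ by
        simpa using abs_sin_le_one _)
  have hlin : Tendsto (fun k : ℕ ↦ (k : ℝ) + 1 / 2) atTop atTop :=
    tendsto_atTop_add_const_right _ _ tendsto_natCast_atTop_atTop
  simpa using ((hRL.comp hlin).const_add (π / 2)).congr fun k ↦ (hsplit k).symm

lemma integral_sin_div_eq_sub_integral_cos_div_sq {T : ℝ} (hT : 0 < T) :
    ∫ x in 1..T, sin x / x = cos 1 - cos T / T - ∫ x in 1..T, cos x / x ^ 2 := by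
  have hpos : ∀ x ∈ Set.uIcc 1 T, 0 < x := fun x hx ↦
    lt_of_lt_of_le (lt_min one_pos hT) hx.1
  have hinv : ∀ x ∈ Set.uIcc 1 T, HasDerivAt (fun y ↦ y⁻¹) (-(x ^ 2)⁻¹) x :=
    fun x hx ↦ hasDerivAt_inv (hpos x hx).ne'
  have hcos : ∀ x ∈ Set.uIcc 1 T, HasDerivAt (-cos) (sin x) x :=
    fun x _ ↦ by simpa using (hasDerivAt_cos x).neg
  have hint : IntervalIntegrable (fun x : ℝ ↦ -(x ^ 2)⁻¹) volume 1 T :=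
    ContinuousOn.intervalIntegrable fun x hx ↦
      ((continuous_pow 2).continuousAt.inv₀
        (pow_ne_zero 2 (hpos x hx).ne')).neg.continuousWithinAt
  have hparts := intervalIntegral.integral_mul_deriv_eq_deriv_mul hinv hcos hint
    (continuous_sin.intervalIntegrable _ _)
  simp only [Pi.neg_apply, inv_mul_eq_div, neg_mul, neg_div, neg_neg, inv_one, one_mul] at hparts
  rw [hparts]
  ring

lemma integrableOn_cos_div_sq : IntegrableOn (fun x ↦ cos x / x ^ 2) (Set.Ioi 1) := by
  refine (integrableOn_Ioi_rpow_of_lt (by norm_num : (-2 : ℝ) < -1) one_pos).mono'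
    (Measurable.aestronglyMeasurable (by fun_prop))
    ((ae_restrict_iff' measurableSet_Ioi).2 (ae_of_all _ fun x (hx : 1 < x) ↦ ?_))
  have hx0 : 0 < x := one_pos.trans hx
  rw [Real.norm_eq_abs, abs_div, abs_of_pos (pow_pos hx0 2), rpow_neg hx0.le,
    rpow_two, ← one_div]
  exact div_le_div_of_nonneg_right (abs_cos_le_one x) (by positivity)

lemma exists_tendsto_integral_sin_div :
    ∃ L, Tendsto (fun T ↦ ∫ x in 0..T, sin x / x) atTop (𝓝 L) := by
  have hcos_div : Tendsto (fun T ↦ cos T / T) atTop (𝓝 0) := by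
    refine squeeze_zero_norm' ?_ tendsto_inv_atTop_zero
    filter_upwards [eventually_gt_atTop 0] with T hT
    rw [Real.norm_eq_abs, abs_div, abs_of_pos hT, ← one_div]
    exact div_le_div_of_nonneg_right (abs_cos_le_one T) hT.le
  refine ⟨_, (((tendsto_const_nhds (x := (∫ x in 0..1, sin x / x) + cos 1)).sub hcos_div).sub
    (intervalIntegral_tendsto_integral_Ioi 1 integrableOn_cos_div_sq tendsto_id)).congr' ?_⟩
  filter_upwards [eventually_gt_atTop 0] with T hT
  have hsinc (a b : ℝ) : IntervalIntegrable (fun x ↦ sin x / x) volume a b := by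
    simpa using intervalIntegrable_sin_mul_div 1 a b
  rw [← integral_add_adjacent_intervals (hsinc 0 1) (hsinc 1 T),
    integral_sin_div_eq_sub_integral_cos_div_sq hT, id]
  ring

theorem tendsto_integral_sin_div :
    Tendsto (fun T ↦ ∫ x in 0..T, sin x / x) atTop (𝓝 (π / 2)) := by
  obtain ⟨L, hL⟩ := exists_tendsto_integral_sin_div
  have hseq : Tendsto (fun k : ℕ ↦ (k + 1 / 2) * π) atTop atTop :=
    (tendsto_atTop_add_const_right _ _ tendsto_natCast_atTop_atTop).atTop_mul_const pi_pos
  rwa [tendsto_nhds_unique (hL.comp hseq) tendsto_integral_sin_div_nat_add_half_mul_pi] at hL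

lemma tendsto_integral_sin_mul_div {c : ℝ} (hc : 0 < c) :
    Tendsto (fun T ↦ ∫ x in 0..T, sin (c * x) / x) atTop (𝓝 (π / 2)) := by
  simp_rw [integral_sin_mul_div_eq_integral_sin_div]
  exact tendsto_integral_sin_div.comp (tendsto_id.const_mul_atTop hc)

noncomputable def oddSine (m : ℕ) (x : ℝ) : ℝ := sin ((2 * m + 1) * x)

lemma sin_mul_sin_sq (a x : ℝ) :
    sin a * sin x ^ 2 = (2 * sin a - sin (a + 2 * x) - sin (a - 2 * x)) / 4 := by
  rw [sin_add, sin_sub, cos_two_mul']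
  linear_combination (sin a / 2) * sin_sq_add_cos_sq x

open Submodule

lemma sin_sq_mul_oddSine_mem_span (m : ℕ) :
    (fun x ↦ sin x ^ 2) * oddSine m ∈ span ℝ (Set.range oddSine) := by
  have hsum (k : ℕ) : ∀ x, sin x ^ 2 * oddSine k x
      = (2 * oddSine k x - oddSine (k + 1) x - sin ((2 * k - 1) * x)) / 4 := fun x ↦ by
    simp only [oddSine, mul_comm (sin x ^ 2), sin_mul_sin_sq]
    push_cast
    ring_nf
  have hmem (k : ℕ) : oddSine k ∈ span ℝ (Set.range oddSine) := subset_span ⟨k, rfl⟩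
  cases m with
  | zero =>
    have : (fun x ↦ sin x ^ 2) * oddSine 0
        = (3 / 4 : ℝ) • oddSine 0 - (1 / 4 : ℝ) • oddSine 1 := by
      ext x
      have hlow : sin ((2 * ((0 : ℕ) : ℝ) - 1) * x) = -oddSine 0 x := by
        simp [oddSine, ← sin_neg]
      simp only [Pi.mul_apply, hsum, hlow, Pi.sub_apply, Pi.smul_apply, smul_eq_mul]
      ring
    rw [this]
    exact sub_mem (smul_mem _ _ (hmem 0)) (smul_mem _ _ (hmem 1))
  | succ j =>
    have : (fun x ↦ sin x ^ 2) * oddSine (j + 1)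
        = (1 / 2 : ℝ) • oddSine (j + 1) - (1 / 4 : ℝ) • oddSine (j + 1 + 1)
          - (1 / 4 : ℝ) • oddSine j := by
      ext x
      have hlow : sin ((2 * ((j + 1 : ℕ) : ℝ) - 1) * x) = oddSine j x := by
        simp only [oddSine]; push_cast; ring_nf
      simp only [Pi.mul_apply, hsum, hlow, Pi.sub_apply, Pi.smul_apply, smul_eq_mul]
      ring
    rw [this]
    exact sub_mem (sub_mem (smul_mem _ _ (hmem _)) (smul_mem _ _ (hmem _)))
      (smul_mem _ _ (hmem _))

lemma sin_sq_mul_mem_span_oddSine {f : ℝ → ℝ} (hf : f ∈ span ℝ (Set.range oddSine)) :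
    (fun x ↦ sin x ^ 2) * f ∈ span ℝ (Set.range oddSine) := by
  induction hf using span_induction with
  | mem _ h => obtain ⟨m, rfl⟩ := h; exact sin_sq_mul_oddSine_mem_span m
  | zero => simp
  | add _ _ _ _ hf hg => rw [mul_add]; exact add_mem hf hg
  | smul c _ _ hf => rw [mul_smul_comm]; exact smul_mem _ c hf

lemma sin_pow_odd_mem_span_oddSine (n : ℕ) :
    (fun x ↦ sin x ^ (2 * n + 1)) ∈ span ℝ (Set.range oddSine) := by
  induction n with
  | zero => exact subset_span ⟨0, funext fun x ↦ by simp [oddSine]⟩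
  | succ n ih =>
    convert sin_sq_mul_mem_span_oddSine ih using 1
    ext x
    simp only [Pi.mul_apply]
    ring

lemma oddSine_div_sin {x : ℝ} (hx : sin x ≠ 0) (m : ℕ) :
    oddSine m x / sin x = dirichletKernel m (2 * x) := by
  have h := dirichletKernel.sin_half_mul m (2 * x)
  rw [mul_div_cancel_left₀ x two_ne_zero] at h
  rw [div_eq_iff hx, mul_comm, h, oddSine]
  ring_nf

lemma eqOn_oddSine_div_sin (m : ℕ) :
    Set.EqOn (fun x ↦ dirichletKernel m (2 * x)) (fun x ↦ oddSine m x / sin x)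
      (Set.uIoo 0 π) :=
  fun x hx ↦ by
    rw [Set.uIoo_of_le pi_pos.le] at hx
    exact (oddSine_div_sin (sin_pos_of_pos_of_lt_pi hx.1 hx.2).ne' m).symm

lemma integral_oddSine_div_sin (m : ℕ) : ∫ x in 0..π, oddSine m x / sin x = π := by
  rw [← integral_congr_uIoo (eqOn_oddSine_div_sin m),
    intervalIntegral.integral_comp_mul_left _ two_ne_zero, mul_zero]
  have := dirichletKernel.integral_natCast_mul_pi m 2
  push_cast at this
  rw [this, smul_eq_mul]
  field_simp

lemma tendsto_integral_div_of_mem_span_oddSine {f : ℝ → ℝ}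
    (hf : f ∈ span ℝ (Set.range oddSine)) :
    (∀ T, IntervalIntegrable (fun x ↦ f x / x) volume 0 T) ∧
      IntervalIntegrable (fun x ↦ f x / sin x) volume 0 π ∧
      Tendsto (fun T ↦ ∫ x in 0..T, f x / x) atTop (𝓝 ((∫ x in 0..π, f x / sin x) / 2)) := by
  induction hf using span_induction with
  | mem _ h =>
    obtain ⟨m, rfl⟩ := h
    refine ⟨fun T ↦ intervalIntegrable_sin_mul_div _ 0 T, ?_, ?_⟩
    · exact ((dirichletKernel.continuous m).comp (continuous_const_mul 2)).intervalIntegrable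
        0 π |>.congr_uIoo (eqOn_oddSine_div_sin m)
    · rw [integral_oddSine_div_sin]
      exact tendsto_integral_sin_mul_div (by positivity)
  | zero => simp
  | add f g _ _ hf hg =>
    simp only [Pi.add_apply, add_div]
    refine ⟨fun T ↦ (hf.1 T).add (hg.1 T), hf.2.1.add hg.2.1, ?_⟩
    simp_rw [intervalIntegral.integral_add (hf.1 _) (hg.1 _),
      intervalIntegral.integral_add hf.2.1 hg.2.1, add_div]
    exact hf.2.2.add hg.2.2
  | smul c f _ hf =>
    simp only [Pi.smul_apply, smul_eq_mul, mul_div_assoc, intervalIntegral.integral_const_mul]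
    exact ⟨fun T ↦ (hf.1 T).const_mul c, hf.2.1.const_mul c, by
      simpa only [mul_div_assoc] using hf.2.2.const_mul c⟩

lemma prod_range_odd_div_even (n : ℕ) :
    ∏ i ∈ Finset.range n, (2 * (i : ℝ) + 1) / (2 * i + 2)
      = ((2 * n - 1)‼ : ℝ) / (2 * n)‼ := by
  induction n with
  | zero => simp
  | succ n ih =>
    rw [Finset.prod_range_succ, ih, show 2 * (n + 1) - 1 = 2 * n + 1 by omega,
      show 2 * (n + 1) = 2 * n + 2 by ring, doubleFactorial_add_one, doubleFactorial_add_two]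
    push_cast
    field_simp

theorem integral_sin_pow_odd_div_id_general (n : ℕ) :
    Tendsto (fun T : ℝ => ∫ x in (0:ℝ)..T, Real.sin x ^ (2 * n + 1) / x)
      atTop (nhds (((2 * n - 1)‼ : ℝ) / ((2 * n)‼ : ℝ) * (π / 2))) := by
  have hlim := (tendsto_integral_div_of_mem_span_oddSine (sin_pow_odd_mem_span_oddSine n)).2.2
  have hpow : Set.EqOn (fun x ↦ sin x ^ (2 * n + 1) / sin x) (fun x ↦ sin x ^ (2 * n))
      (Set.uIoo 0 π) := fun x hx ↦ by
    rw [Set.uIoo_of_le pi_pos.le] at hx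
    dsimp only
    rw [pow_succ, mul_div_cancel_right₀ _ (sin_pos_of_pos_of_lt_pi hx.1 hx.2).ne']
  rw [integral_congr_uIoo hpow, integral_sin_pow_even, prod_range_odd_div_even] at hlim
  convert hlim using 2
  ring

/-- For every positive integer `n`, the improper integral `∫₀^∞ sin^{2n+1} x / x dx`
exists and equals `((2n-1)‼ / (2n)‼) * (π / 2)`. -/
theorem integral_sin_pow_odd_div_id (n : ℕ) (hn : 0 < n) :
    Tendsto (fun T : ℝ => ∫ x in (0:ℝ)..T, Real.sin x ^ (2 * n + 1) / x)
      atTop (nhds (((2 * n - 1)‼ : ℝ) / ((2 * n)‼ : ℝ) * (π / 2))) :=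
  integral_sin_pow_odd_div_id_general n
end

section
/- ∫₀^∞ (sin⁶x / x⁶) dx = 11π/40. -/
/-!
Since `x⁻⁶ = (5!)⁻¹ ∫₀^∞ t⁵ e^{-xt} dt`, Fubini turns the integral into `(5!)⁻¹ ∫₀^∞ t⁵ L(t) dt`,
where `L` is the Laplace transform of `sin⁶`. Linearizing
`sin⁶ x = (10 - 15 cos 2x + 6 cos 4x - cos 6x) / 32` gives
`L(t) = 720 / (t (t² + 4) (t² + 16) (t² + 36))`, and by partial fractions
`t⁵ L(t) = 30 / (t² + 4) - 768 / (t² + 16) + 1458 / (t² + 36)`, whose integral over `(0, ∞)` is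
`(15 / 2 - 96 + 243 / 2) π = 33 π`.
-/

open Real MeasureTheory Set
open scoped Nat

theorem integral_pow_mul_exp_neg_mul (n : ℕ) {x : ℝ} (hx : 0 < x) :
    ∫ t in Ioi (0 : ℝ), t ^ n * exp (-(x * t)) = n ! / x ^ (n + 1) := by
  have h := integral_rpow_mul_exp_neg_mul_Ioi (a := n + 1) (by positivity) hx
  simp only [add_sub_cancel_right, rpow_natCast] at h
  rw [h, Real.Gamma_nat_eq_factorial, ← Nat.cast_add_one, rpow_natCast, one_div, inv_pow]
  ring

theorem integrableOn_pow_mul_exp_neg_mul (n : ℕ) {x : ℝ} (hx : 0 < x) :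
    IntegrableOn (fun t : ℝ => t ^ n * exp (-(x * t))) (Ioi 0) := by
  simpa [rpow_natCast] using integrableOn_rpow_mul_exp_neg_mul_rpow (p := 1) (s := n)
    (by linarith [n.cast_nonneg (α := ℝ)]) one_pos hx

noncomputable def laplaceTransform (g : ℝ → ℝ) (t : ℝ) : ℝ := ∫ x in Ioi 0, exp (-(t * x)) * g x

theorem integral_pow_mul_laplaceTransform {g : ℝ → ℝ} (hg : Measurable g) (n : ℕ)
    (hg_int : IntegrableOn (fun x => g x / x ^ (n + 1)) (Ioi 0)) :
    ∫ t in Ioi 0, t ^ n * laplaceTransform g t = n ! * ∫ x in Ioi 0, g x / x ^ (n + 1) := by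
  set F : ℝ → ℝ → ℝ := fun x t => g x * (t ^ n * exp (-(x * t)))
  have hF : ∀ x ∈ Ioi (0 : ℝ), ∫ t in Ioi 0, F x t = n ! * (g x / x ^ (n + 1)) := by
    intro x hx
    rw [integral_const_mul, integral_pow_mul_exp_neg_mul n hx]
    ring
  have hF_int : Integrable (Function.uncurry F)
      ((volume.restrict (Ioi 0)).prod (volume.restrict (Ioi 0))) := by
    refine (integrable_prod_iff ?_).mpr ⟨?_, ?_⟩
    · exact ((hg.comp measurable_fst).mul (by fun_prop)).aestronglyMeasurable
    · filter_upwards [ae_restrict_mem measurableSet_Ioi] with x hx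
      exact (integrableOn_pow_mul_exp_neg_mul n hx).const_mul (g x)
    · refine (hg_int.norm.const_mul (n ! : ℝ)).congr ?_
      filter_upwards [ae_restrict_mem measurableSet_Ioi] with x (hx : 0 < x)
      have hnorm : ∀ t ∈ Ioi (0 : ℝ), ‖F x t‖ = ‖g x‖ * (t ^ n * exp (-(x * t))) := by
        intro t (ht : 0 < t)
        rw [norm_mul, Real.norm_of_nonneg (by positivity : 0 ≤ t ^ n * exp (-(x * t)))]
      simp only [Function.uncurry_apply_pair]
      rw [setIntegral_congr_fun measurableSet_Ioi hnorm, integral_const_mul,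
        integral_pow_mul_exp_neg_mul n hx, norm_div, norm_pow, Real.norm_of_nonneg hx.le]
      ring
  calc ∫ t in Ioi 0, t ^ n * laplaceTransform g t
      = ∫ t in Ioi 0, ∫ x in Ioi 0, F x t := by
        refine setIntegral_congr_fun measurableSet_Ioi fun t _ => ?_
        rw [laplaceTransform, ← integral_const_mul]
        congr 1 with x
        simp only [F, mul_comm x t]
        ring
    _ = ∫ x in Ioi 0, ∫ t in Ioi 0, F x t := (integral_integral_swap hF_int).symm
    _ = n ! * ∫ x in Ioi 0, g x / x ^ (n + 1) := by
        rw [setIntegral_congr_fun measurableSet_Ioi hF, integral_const_mul]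

theorem integrableOn_exp_neg_mul_mul_cos {t : ℝ} (ht : 0 < t) (k : ℝ) :
    IntegrableOn (fun x => exp (-(t * x)) * cos (k * x)) (Ioi 0) := by
  have hre : (-t + k * Complex.I).re < 0 := by simpa using ht
  have h := (integrableOn_exp_mul_complex_Ioi hre 0).re
  simp [Complex.exp_re] at h
  exact h

-- `exp (-(t * x)) * cos (k * x)` is the real part of `exp ((-t + k * I) * x)`.
theorem laplaceTransform_cos_mul {t : ℝ} (ht : 0 < t) (k : ℝ) :
    laplaceTransform (fun x => cos (k * x)) t = t / (t ^ 2 + k ^ 2) := by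
  have hre : (-t + k * Complex.I).re < 0 := by simpa using ht
  have h := congrArg Complex.re (integral_exp_mul_complex_Ioi hre 0)
  rw [← RCLike.re_to_complex, ← integral_re (integrableOn_exp_mul_complex_Ioi hre 0)] at h
  convert h using 1
  · refine setIntegral_congr_fun measurableSet_Ioi fun x _ => ?_
    simp [Complex.exp_re]
  · simp [Complex.div_re, Complex.normSq, sq]

theorem sin_pow_six_eq (x : ℝ) :
    sin x ^ 6 = (10 - 15 * cos (2 * x) + 6 * cos (4 * x) - cos (6 * x)) / 32 := by
  have h4 : cos (4 * x) = 2 * cos (2 * x) ^ 2 - 1 := by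
    rw [show 4 * x = 2 * (2 * x) by ring, cos_two_mul]
  have h6 : cos (6 * x) = 4 * cos (2 * x) ^ 3 - 3 * cos (2 * x) := by
    rw [show 6 * x = 3 * (2 * x) by ring, cos_three_mul]
  rw [show sin x ^ 6 = (sin x ^ 2) ^ 3 by ring, sin_sq_eq_half_sub, h4, h6]
  ring

theorem laplaceTransform_sin_pow_six {t : ℝ} (ht : 0 < t) :
    laplaceTransform (fun x => sin x ^ 6) t =
      720 / (t * (t ^ 2 + 4) * (t ^ 2 + 16) * (t ^ 2 + 36)) := by
  set e : ℝ → ℝ → ℝ := fun k x => exp (-(t * x)) * cos (k * x)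
  have he : ∀ k, IntegrableOn (e k) (Ioi 0) := integrableOn_exp_neg_mul_mul_cos ht
  have hsum : (fun x => exp (-(t * x)) * sin x ^ 6) =
      fun x => (10 * e 0 x - 15 * e 2 x + 6 * e 4 x - e 6 x) / 32 := by
    ext x
    simp only [e, sin_pow_six_eq, zero_mul, cos_zero]
    ring
  have hL : ∀ k, ∫ x in Ioi 0, e k x = t / (t ^ 2 + k ^ 2) := laplaceTransform_cos_mul ht
  rw [laplaceTransform, hsum, integral_div, integral_sub, integral_add, integral_sub,
    integral_const_mul, integral_const_mul, integral_const_mul, hL, hL, hL, hL]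
  · field_simp
    ring
  all_goals repeat' first
    | exact he _ | apply Integrable.sub | apply Integrable.add | apply Integrable.const_mul

theorem integrable_inv_sq_add_sq {a : ℝ} (ha : a ≠ 0) :
    Integrable (fun t : ℝ => (t ^ 2 + a ^ 2)⁻¹) := by
  convert (integrable_inv_one_add_sq.comp_div ha).const_mul (a ^ 2)⁻¹ using 2 with t
  field_simp
  ring

theorem integral_Ioi_inv_sq_add_sq {a : ℝ} (ha : 0 < a) :
    ∫ t in Ioi (0 : ℝ), (t ^ 2 + a ^ 2)⁻¹ = π / (2 * a) := by
  have h := integral_comp_mul_left_Ioi (fun u : ℝ => (a ^ 2)⁻¹ * (1 + u ^ 2)⁻¹) 0 (inv_pos.mpr ha)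
  simp only [mul_zero, inv_inv, smul_eq_mul] at h
  have hcongr : ∀ t ∈ Ioi (0 : ℝ), (a ^ 2)⁻¹ * (1 + (a⁻¹ * t) ^ 2)⁻¹ = (t ^ 2 + a ^ 2)⁻¹ := by
    intro t _
    field_simp
    ring
  rw [setIntegral_congr_fun measurableSet_Ioi hcongr, integral_const_mul,
    integral_Ioi_inv_one_add_sq, arctan_zero, sub_zero] at h
  rw [h]
  field_simp

theorem sin_div_sq_le_two_mul_inv_one_add_sq (x : ℝ) : (sin x / x) ^ 2 ≤ 2 * (1 + x ^ 2)⁻¹ := by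
  rcases eq_or_ne x 0 with rfl | hx
  · simp
  have h1 : (sin x / x) ^ 2 ≤ 1 := by
    rw [div_pow, div_le_one (by positivity)]
    exact sq_le_sq.mpr abs_sin_le_abs
  have h2 : x ^ 2 * (sin x / x) ^ 2 ≤ 1 := by
    rw [div_pow, mul_div_cancel₀ _ (by positivity)]
    exact sin_sq_le_one x
  rw [le_mul_inv_iff₀ (by positivity)]
  linarith

theorem integrable_sin_div_pow {n : ℕ} (hn : 2 ≤ n) :
    Integrable (fun x : ℝ => (sin x / x) ^ n) := by
  have hmeas : Measurable fun x : ℝ => (sin x / x) ^ n := by fun_prop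
  refine (integrable_inv_one_add_sq.const_mul 2).mono' hmeas.aestronglyMeasurable
    (ae_of_all _ fun x => ?_)
  have h1 : |sin x / x| ≤ 1 := by
    rw [abs_div]
    exact div_le_one_of_le₀ abs_sin_le_abs (abs_nonneg x)
  calc ‖(sin x / x) ^ n‖ = |sin x / x| ^ n := by rw [norm_pow, Real.norm_eq_abs]
    _ ≤ |sin x / x| ^ 2 := pow_le_pow_of_le_one (abs_nonneg _) h1 hn
    _ = (sin x / x) ^ 2 := sq_abs _
    _ ≤ 2 * (1 + x ^ 2)⁻¹ := sin_div_sq_le_two_mul_inv_one_add_sq x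

/-- `∫₀^∞ sin⁶ x / x⁶ dx = 11π / 40` (as an absolutely convergent Lebesgue integral). -/
theorem integral_sin_pow_six_div_pow_six :
    IntegrableOn (fun x : ℝ => Real.sin x ^ 6 / x ^ 6) (Set.Ioi 0) ∧
    ∫ x in Set.Ioi (0:ℝ), Real.sin x ^ 6 / x ^ 6 = 11 * π / 40 := by
  have hint : IntegrableOn (fun x : ℝ => sin x ^ 6 / x ^ 6) (Ioi 0) := by
    simpa only [div_pow] using (integrable_sin_div_pow (by norm_num : 2 ≤ 6)).integrableOn
  refine ⟨hint, ?_⟩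
  have hfub := integral_pow_mul_laplaceTransform (g := fun x => sin x ^ 6) (by fun_prop) 5 hint
  have hpf : ∀ t ∈ Ioi (0 : ℝ), t ^ 5 * laplaceTransform (fun x => sin x ^ 6) t =
      30 * (t ^ 2 + 2 ^ 2)⁻¹ - 768 * (t ^ 2 + 4 ^ 2)⁻¹ + 1458 * (t ^ 2 + 6 ^ 2)⁻¹ := by
    intro t (ht : 0 < t)
    rw [laplaceTransform_sin_pow_six ht]
    field_simp
    ring
  rw [setIntegral_congr_fun measurableSet_Ioi hpf, integral_add, integral_sub,
    integral_const_mul, integral_const_mul, integral_const_mul, integral_Ioi_inv_sq_add_sq,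
    integral_Ioi_inv_sq_add_sq, integral_Ioi_inv_sq_add_sq] at hfub
  · norm_num [Nat.factorial] at hfub
    linarith
  all_goals repeat' first
    | norm_num; done | apply Integrable.sub | apply Integrable.const_mul
    | exact (integrable_inv_sq_add_sq (by norm_num)).integrableOn
end

section
/- Let α be a real number that is not an integer multiple of π. For every real x, one has 1 − sin x / sin α = (1 − x/α) · ∏_{n=1}^∞ (1 − x/((2n−1)π − α)) (1 + x/((2n−1)π + α)) (1 − x/(2nπ + α)) (1 + x/(2nπ − α)), where the infinite product converges. -/
/-!
For each `n`, the four factors with index `n` combine to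
`(1 - (x + α)² / ((2n - 1)π)²) (1 - (x - α)² / (2nπ)²)` divided by
`(1 - α² / ((2n - 1)π)²) (1 - α² / (2nπ)²)`. In Euler's product `sinc y = ∏ₖ (1 - y² / (kπ)²)`,
the factors with odd `k` multiply to `cos (y / 2)` and those with even `k` to `sinc (y / 2)`.
So the numerators multiply to `cos ((x + α) / 2) sinc ((x - α) / 2)` and the denominators to
`sinc α`, and the theorem follows from `sin x - sin α = 2 sin ((x - α) / 2) cos ((x + α) / 2)`.

The odd part equals `cos (y / 2)` by comparing `sinc y = cos (y / 2) sinc (y / 2)` with the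
even/odd splitting of the product, as long as `sinc (y / 2) ≠ 0`. It then holds for every `y`,
because the product converges locally uniformly and is therefore continuous in `y`.
-/

open Real Filter Topology

lemma summable_inv_sq_succ_mul_pi : Summable fun k : ℕ => ((((k : ℝ) + 1) * π) ^ 2)⁻¹ := by
  have h := (summable_nat_add_iff 1).mpr (Real.summable_one_div_nat_pow.mpr one_lt_two)
  refine (h.mul_right (π ^ 2)⁻¹).congr fun k => ?_
  push_cast
  rw [one_div, mul_pow, mul_inv]

section OneSubSqDiv

variable {d : ℕ → ℝ}

lemma multipliable_one_sub_sq_div (hd : Summable fun n => (d n)⁻¹) (y : ℝ) :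
    Multipliable fun n => 1 - y ^ 2 / d n := by
  simp_rw [sub_eq_add_neg]
  refine multipliable_one_add_of_summable ?_
  simpa [div_eq_mul_inv, abs_mul] using hd.abs.mul_left (y ^ 2)

lemma continuous_tprod_one_sub_sq_div (hd : Summable fun n => (d n)⁻¹) :
    Continuous fun y => ∏' n, (1 - y ^ 2 / d n) := by
  refine continuous_iff_continuousAt.mpr fun y₀ => ?_
  set R := |y₀| + 1
  have hK : Set.Icc (-R) R ∈ 𝓝 y₀ :=
    Icc_mem_nhds (by grind [neg_abs_le]) (by grind [le_abs_self])
  have hbound : ∀ᶠ n in atTop, ∀ y ∈ Set.Icc (-R) R, ‖-(y ^ 2 / d n)‖ ≤ R ^ 2 * |(d n)⁻¹| := by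
    refine Eventually.of_forall fun n y hy => ?_
    rw [norm_neg, norm_div, norm_pow, Real.norm_eq_abs, Real.norm_eq_abs, div_eq_mul_inv,
      abs_inv]
    gcongr
    exact abs_le.mpr hy
  have hprod := Summable.hasProdUniformlyOn_nat_one_add isCompact_Icc (hd.abs.mul_left _) hbound
    fun n => by fun_prop
  simp only [← sub_eq_add_neg] at hprod
  exact (hprod.tendstoUniformlyOn_finsetRange.continuousOn
    (Frequently.of_forall fun N => by fun_prop)).continuousAt hK

end OneSubSqDiv

namespace Real

lemma mul_sinc (y : ℝ) : y * sinc y = sin y := by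
  rcases eq_or_ne y 0 with rfl | hy
  · simp
  · rw [sinc_of_ne_zero hy, mul_div_cancel₀ _ hy]

lemma sinc_eq_cos_half_mul_sinc_half (y : ℝ) : sinc y = cos (y / 2) * sinc (y / 2) := by
  rcases eq_or_ne y 0 with rfl | hy
  · simp
  · rw [sinc_of_ne_zero hy, sinc_of_ne_zero (div_ne_zero hy two_ne_zero)]
    conv_lhs => rw [← mul_div_cancel₀ y (two_ne_zero' ℝ), sin_two_mul]
    field_simp

lemma countable_setOf_sinc_eq_zero : {y : ℝ | sinc y = 0}.Countable := by
  refine (Set.countable_range fun k : ℤ => k * π).mono fun y hy => ?_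
  rcases eq_or_ne y 0 with rfl | hy0
  · simp at hy
  · rw [Set.mem_ofPred_eq, sinc_of_ne_zero hy0, div_eq_zero_iff, or_iff_left hy0] at hy
    exact sin_eq_zero_iff.mp hy

end Real

/-- The factor of index `k + 1` in Euler's product, so `sincFactor y (2 * n)` has odd index. -/
noncomputable def sincFactor (y : ℝ) (k : ℕ) : ℝ := 1 - y ^ 2 / (((k : ℝ) + 1) * π) ^ 2

lemma multipliable_sincFactor (y : ℝ) : Multipliable (sincFactor y) :=
  multipliable_one_sub_sq_div summable_inv_sq_succ_mul_pi y

lemma hasProd_sincFactor (y : ℝ) : HasProd (sincFactor y) (sinc y) := by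
  rw [(multipliable_sincFactor y).hasProd_iff_tendsto_nat]
  rcases eq_or_ne y 0 with rfl | hy
  · simp [sincFactor]
  have hfactor (j : ℕ) : 1 - (y / π) ^ 2 / ((j : ℝ) + 1) ^ 2 = sincFactor y j := by
    rw [sincFactor, div_pow, div_div, mul_pow, mul_comm]
  have hpi : π * (y / π) = y := mul_div_cancel₀ y pi_ne_zero
  have h := (tendsto_euler_sin_prod (y / π)).div_const y
  simp only [hfactor, hpi, mul_div_cancel_left₀ _ hy] at h
  rwa [sinc_of_ne_zero hy]

lemma sincFactor_two_mul_add_one (y : ℝ) (n : ℕ) :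
    sincFactor y (2 * n + 1) = sincFactor (y / 2) n := by
  simp only [sincFactor]
  push_cast
  field_simp
  ring

lemma hasProd_sincFactor_two_mul_add_one (y : ℝ) :
    HasProd (fun n => sincFactor y (2 * n + 1)) (sinc (y / 2)) := by
  simpa only [sincFactor_two_mul_add_one] using hasProd_sincFactor (y / 2)

lemma summable_inv_sq_two_mul_add_one_mul_pi :
    Summable fun n : ℕ => (((((2 * n : ℕ) : ℝ) + 1) * π) ^ 2)⁻¹ :=
  summable_inv_sq_succ_mul_pi.comp_injective (mul_right_injective₀ two_ne_zero)

lemma hasProd_sincFactor_two_mul_of_sinc_ne_zero {y : ℝ} (hy : sinc (y / 2) ≠ 0) :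
    HasProd (fun n => sincFactor y (2 * n)) (cos (y / 2)) := by
  obtain ⟨c, hc⟩ : Multipliable fun n => sincFactor y (2 * n) :=
    multipliable_one_sub_sq_div summable_inv_sq_two_mul_add_one_mul_pi y
  have hsplit :=
    (hc.even_mul_odd (hasProd_sincFactor_two_mul_add_one y)).unique (hasProd_sincFactor y)
  rw [sinc_eq_cos_half_mul_sinc_half y] at hsplit
  rwa [mul_right_cancel₀ hy hsplit] at hc

lemma hasProd_sincFactor_two_mul (y : ℝ) :
    HasProd (fun n => sincFactor y (2 * n)) (cos (y / 2)) := by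
  have hd := summable_inv_sq_two_mul_add_one_mul_pi
  suffices (fun y => ∏' n, sincFactor y (2 * n)) = fun y => cos (y / 2) from
    congr_fun this y ▸ (multipliable_one_sub_sq_div hd y).hasProd
  have hdense : Dense {y : ℝ | sinc (y / 2) = 0}ᶜ :=
    (countable_setOf_sinc_eq_zero.preimage
      (mul_left_injective₀ (inv_ne_zero two_ne_zero))).dense_compl ℝ
  exact (continuous_tprod_one_sub_sq_div hd).ext_on hdense (by fun_prop)
    fun y hy => (hasProd_sincFactor_two_mul_of_sinc_ne_zero hy).tprod_eq

lemma one_sub_div_mul_one_add_div {a b : ℝ} (x : ℝ) (ha : a ≠ 0) (hsub : a - b ≠ 0)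
    (hadd : a + b ≠ 0) :
    (1 - x / (a - b)) * (1 + x / (a + b)) = (1 - (x + b) ^ 2 / a ^ 2) / (1 - b ^ 2 / a ^ 2) := by
  have : a ^ 2 - b ^ 2 ≠ 0 := by
    rw [sq_sub_sq]
    exact mul_ne_zero hadd hsub
  field_simp
  ring

lemma root_factors_eq_div_sincFactor {α : ℝ} (hα : ∀ k : ℤ, α ≠ k * π) (x : ℝ) (n : ℕ) :
    (1 - x / ((2 * ((n : ℝ) + 1) - 1) * π - α)) * (1 + x / ((2 * ((n : ℝ) + 1) - 1) * π + α)) *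
        (1 - x / (2 * ((n : ℝ) + 1) * π + α)) * (1 + x / (2 * ((n : ℝ) + 1) * π - α)) =
      sincFactor (x + α) (2 * n) * sincFactor (x - α) (2 * n + 1) /
        (sincFactor α (2 * n) * sincFactor α (2 * n + 1)) := by
  have hsub (k : ℤ) : k * π - α ≠ 0 := fun h => hα k (by linarith)
  have hadd (k : ℤ) : k * π + α ≠ 0 := fun h => hα (-k) (by push_cast; linarith)
  set a₁ := (2 * ((n : ℝ) + 1) - 1) * π
  set a₂ := 2 * ((n : ℝ) + 1) * π
  have ha₁ : a₁ = ((2 * n + 1 : ℤ) : ℝ) * π := by push_cast; ring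
  have ha₂ : a₂ = ((2 * n + 2 : ℤ) : ℝ) * π := by push_cast; ring
  have hfactor₁ (y : ℝ) : sincFactor y (2 * n) = 1 - y ^ 2 / a₁ ^ 2 := by
    rw [sincFactor, ha₁]; push_cast; ring
  have hfactor₂ (y : ℝ) : sincFactor y (2 * n + 1) = 1 - y ^ 2 / a₂ ^ 2 := by
    rw [sincFactor, ha₂]; push_cast; ring
  have key₁ := one_sub_div_mul_one_add_div (a := a₁) x (by rw [ha₁]; positivity)
    (ha₁ ▸ hsub _) (ha₁ ▸ hadd _)
  have key₂ := one_sub_div_mul_one_add_div (a := a₂) (b := -α) x (by rw [ha₂]; positivity)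
    (by rw [ha₂, sub_neg_eq_add]; exact hadd _) (by rw [ha₂, ← sub_eq_add_neg]; exact hsub _)
  rw [sub_neg_eq_add, ← sub_eq_add_neg, ← sub_eq_add_neg, neg_sq] at key₂
  rw [hfactor₁, hfactor₁, hfactor₂, hfactor₂, mul_div_mul_comm, ← key₁, ← key₂]
  ring

/-- Infinite product expansion of `1 - sin x / sin α`: for `α` not an integer multiple
of `π` and every real `x`,
`1 - sin x / sin α = (1 - x/α) ∏_{n=1}^∞ (1 - x/((2n-1)π - α))(1 + x/((2n-1)π + α))
  (1 - x/(2nπ + α))(1 + x/(2nπ - α))`, the infinite product being convergent. -/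
theorem one_sub_sin_div_sin_eq_prod (α : ℝ) (hα : ∀ k : ℤ, α ≠ k * π) (x : ℝ) :
    ∃ P : ℝ,
      HasProd
        (fun n : ℕ =>
          (1 - x / ((2 * ((n : ℝ) + 1) - 1) * π - α)) *
          (1 + x / ((2 * ((n : ℝ) + 1) - 1) * π + α)) *
          (1 - x / (2 * ((n : ℝ) + 1) * π + α)) *
          (1 + x / (2 * ((n : ℝ) + 1) * π - α))) P ∧
      1 - Real.sin x / Real.sin α = (1 - x / α) * P := by
  have hα0 : α ≠ 0 := by simpa using hα 0
  have hsin : sin α ≠ 0 := fun h => by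
    obtain ⟨k, hk⟩ := sin_eq_zero_iff.mp h
    exact hα k hk.symm
  have hsinc : sinc α ≠ 0 := by
    rw [sinc_of_ne_zero hα0]
    exact div_ne_zero hsin hα0
  have hnum :=
    (hasProd_sincFactor_two_mul (x + α)).mul (hasProd_sincFactor_two_mul_add_one (x - α))
  have hden := (hasProd_sincFactor_two_mul α).mul (hasProd_sincFactor_two_mul_add_one α)
  rw [← sinc_eq_cos_half_mul_sinc_half] at hden
  refine ⟨_, funext (root_factors_eq_div_sincFactor hα x) ▸ hnum.div₀ hden hsinc, ?_⟩
  have hdiff := sin_sub_sin x α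
  have hhalf := mul_sinc ((x - α) / 2)
  rw [sinc_of_ne_zero hα0]
  field_simp
  linear_combination -hdiff + 2 * cos ((x + α) / 2) * hhalf
end
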